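/- arXiv:2205.04704 — 5 statements merged into one kernel-verified Lean document; each statement's English description precedes it below -/
import Mathlib

section
/- Let a and b be elements of a unital complex C*-algebra (equivalently, bounded operators on a complex Hilbert space) with b normal. Then the spectrum of a is contained within distance ‖a − b‖ of the spectrum of b; that is, for every complex number z in the spectrum of a there exists w in the spectrum of b with |z − w| ≤ ‖a − b‖. -/
/-- Let `a` and `b` be elements of a unital complex C*-algebra with `b`
normal.  Then the spectrum of `a` is contained within distance `‖a - b‖` of the spectrum of
`b`: for every `z` in the spectrum of `a` there is `w` in the spectrum of `b` with
`‖z - w‖ ≤ ‖a - b‖`. -/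
theorem spectrum_subset_of_norm_sub {A : Type*} [CStarAlgebra A]
    (a b : A) (hb : IsStarNormal b) :
    ∀ z ∈ spectrum ℂ a, ∃ w ∈ spectrum ℂ b, ‖z - w‖ ≤ ‖a - b‖ := by
  intro z hz
  rcases subsingleton_or_nontrivial A with hA | hA
  · exact absurd (isUnit_of_subsingleton _) hz
  by_cases hab : a = b
  · exact ⟨z, hab ▸ hz, by simp [hab]⟩
  by_contra h
  push_neg at h
  have hr : (0 : ℝ) < ‖a - b‖ := by
    rw [norm_pos_iff]; exact sub_ne_zero.mpr hab
  have hzb : z ∉ spectrum ℂ b := by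
    intro hzb
    have := h z hzb
    simp only [sub_self, norm_zero] at this
    exact absurd this (not_lt.mpr hr.le)
  have hc : IsUnit (algebraMap ℂ A z - b) := spectrum.notMem_iff.mp hzb
  obtain ⟨u, hu⟩ := hc
  -- the element `↑ₐ z - b` is star-normal
  have hcomm : Commute (star ((u : A))) (u : A) := by
    rw [hu, star_sub, ← algebraMap_star_comm]
    refine Commute.sub_left (Commute.sub_right ?_ ?_) (Commute.sub_right ?_ ?_)
    · exact Algebra.commutes _ _
    · exact Algebra.commutes _ _
    · exact (Algebra.commutes _ _).symm
    · exact hb.star_comm_self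
  have hnormal : IsStarNormal ((↑u⁻¹ : A)) := by
    constructor
    rw [← Units.coe_star_inv]
    exact (hcomm.units_inv_right).units_inv_left
  -- spectral radius bound for the inverse
  have hspec : ∀ k ∈ spectrum ℂ ((↑u⁻¹ : A)), ‖k‖₊ < (‖a - b‖₊)⁻¹ := by
    intro k hk
    rw [← spectrum.map_inv, Set.mem_inv] at hk
    rw [hu, ← spectrum.singleton_sub_eq] at hk
    obtain ⟨zz, hzz, w, hw, hzw⟩ := hk
    rw [Set.mem_singleton_iff] at hzz
    subst hzz
    have hlt : ‖a - b‖ < ‖k⁻¹‖ := hzw ▸ h w hw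
    by_cases hk0 : k = 0
    · simp [hk0] at hlt
      exact absurd hr (not_lt.mpr hlt.le)
    · have hk0' : (0 : ℝ) < ‖k‖ := norm_pos_iff.mpr hk0
      rw [norm_inv] at hlt
      have h1 : ‖a - b‖ * ‖a - b‖⁻¹ = 1 := mul_inv_cancel₀ hr.ne'
      have h2 : ‖k‖ * ‖k‖⁻¹ = 1 := mul_inv_cancel₀ hk0'.ne'
      have : ‖k‖ < ‖a - b‖⁻¹ := by nlinarith
      rw [← NNReal.coe_lt_coe]
      push_cast
      exact this
  have hrad : spectralRadius ℂ ((↑u⁻¹ : A)) < (((‖a - b‖₊)⁻¹ : NNReal) : ENNReal) :=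
    spectrum.spectralRadius_lt_of_forall_lt_of_nonempty (spectrum.nonempty _) hspec
  rw [hnormal.spectralRadius_eq_nnnorm, ENNReal.coe_lt_coe] at hrad
  have hnorm : ‖(↑u⁻¹ : A)‖ < ‖a - b‖⁻¹ := by
    have := (NNReal.coe_lt_coe).mpr hrad
    rwa [NNReal.coe_inv, coe_nnnorm, coe_nnnorm] at this
  have hsmall : ‖(↑u⁻¹ : A) * (a - b)‖ < 1 := by
    calc ‖(↑u⁻¹ : A) * (a - b)‖ ≤ ‖(↑u⁻¹ : A)‖ * ‖a - b‖ := norm_mul_le _ _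
      _ < ‖a - b‖⁻¹ * ‖a - b‖ := by
          exact mul_lt_mul_of_pos_right hnorm hr
      _ = 1 := inv_mul_cancel₀ hr.ne'
  have key : algebraMap ℂ A z - a = ↑u * (1 - (↑u⁻¹ : A) * (a - b)) := by
    rw [mul_sub, mul_one, ← mul_assoc, u.mul_inv, one_mul, hu]
    abel
  have hunit : IsUnit (algebraMap ℂ A z - a) := by
    rw [key]
    exact u.isUnit.mul <| by
      have := (Units.oneSub _ hsmall).isUnit
      rwa [Units.val_oneSub] at this
  exact (spectrum.mem_iff.mp hz) hunit
end

section
/- Let a be a self-adjoint element of a C*-algebra A such that ‖a² − a‖ < ε for some ε with 0 < ε ≤ 1/4. Then there is a projection p ∈ A such that ‖p − a‖ < √ε. -/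
/-- Let `a` be a self-adjoint element of a C*-algebra `A` such that
`‖a² - a‖ < ε ≤ 1/4` (with `ε > 0`).  Then there is a projection `p ∈ A` such that
`‖p - a‖ < √ε`. -/
theorem exists_projection_near_almost_idempotent {A : Type*} [NonUnitalCStarAlgebra A]
    (a : A) (ha : IsSelfAdjoint a) (ε : ℝ) (hε0 : 0 < ε) (hε : ε ≤ 1 / 4)
    (h : ‖a * a - a‖ < ε) :
    ∃ p : A, star p = p ∧ p * p = p ∧ ‖p - a‖ < Real.sqrt ε := by
  set s := Real.sqrt ε with hs
  have hs0 : 0 < s := Real.sqrt_pos.mpr hε0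
  have hs2 : s ^ 2 = ε := Real.sq_sqrt hε0.le
  have hshalf : s ≤ 1 / 2 := by
    rw [hs, show (1:ℝ)/2 = Real.sqrt (1/4) by
      rw [show (1:ℝ)/4 = (1/2)^2 by norm_num, Real.sqrt_sq (by norm_num)]]
    exact Real.sqrt_le_sqrt hε
  set r := ‖a * a - a‖ with hr
  have hr0 : 0 ≤ r := norm_nonneg _
  -- the quadratic function
  set q : ℝ → ℝ := fun x => x * x - x with hq
  have hqc : ContinuousOn q (quasispectrum ℝ a) := by fun_prop
  have hq0 : q 0 = 0 := by simp [hq]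
  have hqa : cfcₙ q a = a * a - a := by
    rw [hq]
    rw [cfcₙ_sub (fun x : ℝ => x * x) (fun x : ℝ => x) a (by fun_prop) (by norm_num) (by fun_prop) rfl]
    rw [cfcₙ_mul (fun x : ℝ => x) (fun x : ℝ => x) a (by fun_prop) rfl (by fun_prop) rfl]
    rw [cfcₙ_id' ℝ a]
  -- spectral bound
  have key : ∀ x ∈ quasispectrum ℝ a, |x * x - x| ≤ r := by
    intro x hx
    have := norm_apply_le_norm_cfcₙ q a hx hqc hq0 ha
    rwa [hqa, Real.norm_eq_abs] at this
  have hhalf : ∀ x ∈ quasispectrum ℝ a, x ≠ 1 / 2 := by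
    intro x hx hx2
    have := key x hx
    rw [hx2] at this
    have : |(1:ℝ)/2 * (1/2) - 1/2| = 1/4 := by norm_num
    have h2 := key x hx
    rw [hx2] at h2
    norm_num at h2
    linarith
  -- the projection function
  set g : ℝ → ℝ := fun x => if x < 1 / 2 then 0 else 1 with hg
  have hg0 : g 0 = 0 := by norm_num [hg]
  have hgc : ContinuousOn g (quasispectrum ℝ a) := by
    intro x hx
    rcases lt_or_gt_of_ne (hhalf x hx) with h1 | h1
    · have hev : g =ᶠ[nhds x] fun _ => (0:ℝ) := by
        filter_upwards [Iio_mem_nhds h1] with y hy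
        simp only [hg, if_pos (Set.mem_Iio.mp hy)]
      exact (continuousAt_const.congr hev.symm).continuousWithinAt
    · have hev : g =ᶠ[nhds x] fun _ => (1:ℝ) := by
        filter_upwards [Ioi_mem_nhds h1] with y hy
        simp only [hg, if_neg (not_lt.mpr (le_of_lt (Set.mem_Ioi.mp hy)))]
      exact (continuousAt_const.congr hev.symm).continuousWithinAt
  refine ⟨cfcₙ g a, IsSelfAdjoint.cfcₙ, ?_, ?_⟩
  · rw [← cfcₙ_mul g g a hgc hg0 hgc hg0]
    apply cfcₙ_congr
    intro x _
    simp only [hg]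
    split_ifs <;> norm_num
  · have hsub : cfcₙ g a - a = cfcₙ (fun x => g x - x) a := by
      rw [cfcₙ_sub g (fun x : ℝ => x) a hgc hg0 (by fun_prop) rfl, cfcₙ_id' ℝ a]
    rw [show cfcₙ g a - a = cfcₙ (fun x => g x - x) a from hsub]
    apply norm_cfcₙ_lt
    intro x hx
    have hb := key x hx
    rw [Real.norm_eq_abs, abs_lt]
    rw [abs_le] at hb
    simp only [hg]
    split_ifs with h1
    · -- g x = 0, need |0 - x| < s, i.e. -s < -x < s
      constructor
      · -- -s < -x, i.e. x < s
        nlinarith [mul_self_nonneg (x - s), mul_self_nonneg x]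
      · -- -x < s, i.e. -s < x ... need x > -s
        nlinarith [mul_self_nonneg (x + s), mul_self_nonneg x]
    · -- g x = 1, need |1 - x| < s
      push_neg at h1
      constructor
      · nlinarith [mul_self_nonneg (x - 1 + s), mul_self_nonneg (x - 1)]
      · nlinarith [mul_self_nonneg (x - 1 - s), mul_self_nonneg (x - 1)]
end

section
/- Let A₁, …, A_k be unital C*-algebras and let α be an ordinal. Then the direct sum A₁ ⊕ ⋯ ⊕ A_k (with coordinatewise operations and supremum norm) is in the class D_α if and only if each A_i is in D_α. -/
universe u

/-- `a ∈_ε S`: there is `s ∈ S` with `‖a - s‖ < ε`. -/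
def MemEps {A : Type u} [CStarAlgebra A] (ε : ℝ) (S : Set A) (a : A) : Prop :=
  ∃ s ∈ S, ‖a - s‖ < ε

/-- `S ⊆_ε T`. -/
def SubsetEps {A : Type u} [CStarAlgebra A] (ε : ℝ) (S T : Set A) : Prop :=
  ∀ s ∈ S, ‖s‖ ≤ 1 → ∃ t ∈ T, ‖t‖ ≤ 1 ∧ ‖s - t‖ < ε

/-- A unital C*-algebra `A` decomposes over a class `𝒞` of C*-subalgebras of `A`
(Definition 2.3 of the paper). -/
def Decomposes (A : Type u) [CStarAlgebra A]
    (𝒞 : NonUnitalStarSubalgebra ℂ A → Prop) : Prop :=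
  ∀ (X : Finset A) (ε : ℝ), 0 < ε →
    ∃ C D E : NonUnitalStarSubalgebra ℂ A, 𝒞 C ∧ 𝒞 D ∧ 𝒞 E ∧
      ∃ h : A, (∃ x : A, h = star x * x) ∧ ‖h‖ ≤ 1 ∧
        (∀ x ∈ X, ‖h * x - x * h‖ < ε) ∧
        (∀ x ∈ X, MemEps ε (C : Set A) (h * x)) ∧
        (∀ x ∈ X, MemEps ε (D : Set A) ((1 - h) * x)) ∧
        (∀ x ∈ X, MemEps ε (E : Set A) (h * ((1 - h) * x))) ∧
        SubsetEps ε (E : Set A) (C : Set A) ∧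
        SubsetEps ε (E : Set A) (D : Set A) ∧
        (∀ e ∈ E, ‖e‖ ≤ 1 → MemEps ε (E : Set A) (h * e))

/-- A unital C*-algebra is locally finite-dimensional. -/
def IsLocFinDim (A : Type u) [CStarAlgebra A] : Prop :=
  ∀ (X : Finset A) (ε : ℝ), 0 < ε →
    ∃ F : NonUnitalStarSubalgebra ℂ A, FiniteDimensional ℂ F ∧
      ∀ x ∈ X, MemEps ε (F : Set A) x

/-- The C*-subalgebra `S` of `A` is *-isomorphic to the C*-algebra `B`. -/
def SubIso {A : Type u} [CStarAlgebra A] (S : NonUnitalStarSubalgebra ℂ A)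
    (B : Type u) [CStarAlgebra B] : Prop :=
  Nonempty (S ≃⋆ₐ[ℂ] B)

/-- Membership in the class `D_α` of the complexity hierarchy (Definition 2.4 of the paper):
`D₀` consists of the unital locally finite-dimensional C*-algebras, and for `α > 0`, `D_α`
consists of the unital C*-algebras decomposing over the class `⋃_{β<α} D_β`; a C*-subalgebra
belongs to that class when it is closed and *-isomorphic to some unital C*-algebra in some
`D_β` with `β < α`. -/
def InD (α : Ordinal.{u}) (A : Type u) [CStarAlgebra A] : Prop :=
  (α = 0 ∧ IsLocFinDim A) ∨
  (α ≠ 0 ∧ Decomposes A fun S =>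
      IsClosed (S : Set A) ∧
      ∃ β : {b : Ordinal.{u} // b < α}, ∃ (B : Type u) (instB : CStarAlgebra B),
        @InD β.1 B instB ∧ @SubIso A _ S B instB)
termination_by α
decreasing_by exact β.2


/-- The class InD decomposes over. -/
def DClass (α : Ordinal.{u}) (A : Type u) [CStarAlgebra A] :
    NonUnitalStarSubalgebra ℂ A → Prop := fun S =>
  IsClosed (S : Set A) ∧
  ∃ β : {b : Ordinal.{u} // b < α}, ∃ (B : Type u) (instB : CStarAlgebra B),
    @InD β.1 B instB ∧ @SubIso A _ S B instB

theorem inD_iff (α : Ordinal.{u}) (A : Type u) [CStarAlgebra A] :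
    InD α A ↔ ((α = 0 ∧ IsLocFinDim A) ∨ (α ≠ 0 ∧ Decomposes A (DClass α A))) := by
  rw [InD]; rfl

theorem inD_zero {A : Type u} [CStarAlgebra A] (h : IsLocFinDim A) : InD 0 A := by
  rw [inD_iff]; exact Or.inl ⟨rfl, h⟩

theorem inD_ne_zero' {α : Ordinal.{u}} {A : Type u} [CStarAlgebra A] (hα : α ≠ 0)
    (h : Decomposes A (DClass α A)) : InD α A := by
  rw [inD_iff]; exact Or.inr ⟨hα, h⟩

theorem decomposes_mono {A : Type u} [CStarAlgebra A]
    {𝒞 𝒟 : NonUnitalStarSubalgebra ℂ A → Prop} (h : ∀ S, 𝒞 S → 𝒟 S) :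
    Decomposes A 𝒞 → Decomposes A 𝒟 := by
  intro hd X ε hε
  obtain ⟨C, D, E, hC, hD, hE, rest⟩ := hd X ε hε
  exact ⟨C, D, E, h C hC, h D hD, h E hE, rest⟩

theorem dClass_mono {A : Type u} [CStarAlgebra A] {β α : Ordinal.{u}} (hβα : β ≤ α)
    (S : NonUnitalStarSubalgebra ℂ A) : DClass β A S → DClass α A S := by
  rintro ⟨h1, ⟨γ, hγ⟩, B, instB, h2, h3⟩
  exact ⟨h1, ⟨γ, lt_of_lt_of_le hγ hβα⟩, B, instB, h2, h3⟩
section UnitalOfClosed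
variable {A : Type u} [CStarAlgebra A] (S : NonUnitalStarSubalgebra ℂ A)
  (hS : IsClosed (S : Set A)) (u : A) (hu : u ∈ S)
  (hul : ∀ x ∈ S, u * x = x) (hur : ∀ x ∈ S, x * u = x)

/-- A closed non-unital star subalgebra with an internal unit is a unital C*-algebra. -/
noncomputable def unitalOfClosed : CStarAlgebra ↥S := by
  letI : One ↥S := ⟨⟨u, hu⟩⟩
  have one_mul' : ∀ x : ↥S, 1 * x = x := fun x => Subtype.ext (hul x.1 x.2)
  have mul_one' : ∀ x : ↥S, x * 1 = x := fun x => Subtype.ext (hur x.1 x.2)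
  letI ring : Ring ↥S :=
    { (inferInstance : NonUnitalRing ↥S) with
      one := ⟨u, hu⟩
      one_mul := one_mul'
      mul_one := mul_one' }
  letI : Algebra ℂ ↥S :=
    { algebraMap :=
        { toFun := fun c => c • (1 : ↥S)
          map_one' := one_smul ℂ (1 : ↥S)
          map_mul' := fun c d => by
            ext
            show (c * d) • u = (c • (1:↥S) * (d • (1:↥S)) : ↥S).1
            show (c * d) • u = (c • u) * (d • u)
            rw [smul_mul_smul_comm, hul u hu]
          map_zero' := zero_smul ℂ (1 : ↥S)
          map_add' := fun c d => add_smul c d (1 : ↥S) }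
      commutes' := fun c x => by
        ext
        show (c • u) * x.1 = x.1 * (c • u)
        rw [smul_mul_assoc, mul_smul_comm, hul x.1 x.2, hur x.1 x.2]
      smul_def' := fun c x => by
        ext
        show c • x.1 = (c • u) * x.1
        rw [smul_mul_assoc, hul x.1 x.2] }
  letI nr : NormedRing ↥S :=
    { ring, (inferInstance : NonUnitalNormedRing ↥S) with }
  letI : NormedAlgebra ℂ ↥S :=
    { (inferInstance : Algebra ℂ ↥S) with
      norm_smul_le := fun c x => by
        show ‖c • x.1‖ ≤ ‖c‖ * ‖x.1‖
        exact norm_smul_le c x.1 }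
  exact
    { nr, (inferInstance : StarRing ↥S), (inferInstance : CStarRing ↥S),
      (inferInstance : NormedAlgebra ℂ ↥S), (inferInstance : StarModule ℂ ↥S) with
      toCompleteSpace := hS.completeSpace_coe }

end UnitalOfClosed

section Helpers
variable {A : Type u} [CStarAlgebra A]

/-- transfer fin-dimensionality between the subalgebra subtype and its submodule. -/
noncomputable def subtypeLinEquiv (S : NonUnitalStarSubalgebra ℂ A) :
    ↥S ≃ₗ[ℂ] ↥S.toSubmodule where
  toFun x := ⟨x.1, x.2⟩
  invFun x := ⟨x.1, x.2⟩
  left_inv x := rfl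
  right_inv x := rfl
  map_add' x y := rfl
  map_smul' c x := rfl

theorem findim_coe {S : NonUnitalStarSubalgebra ℂ A}
    (h : FiniteDimensional ℂ ↥S.toSubmodule) : FiniteDimensional ℂ ↥S :=
  Module.Finite.equiv (subtypeLinEquiv S).symm

theorem findim_toSubmodule {S : NonUnitalStarSubalgebra ℂ A}
    (h : FiniteDimensional ℂ ↥S) : FiniteDimensional ℂ ↥S.toSubmodule :=
  Module.Finite.equiv (subtypeLinEquiv S)

theorem isLocFinDim_of_finiteDimensional (B : Type u) [CStarAlgebra B]
    [FiniteDimensional ℂ B] : IsLocFinDim B := by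
  intro X ε hε
  refine ⟨⊤, findim_coe (Module.Finite.equiv (Submodule.topEquiv (R := ℂ) (M := B)).symm), ?_⟩
  intro x hx
  exact ⟨x, by simp, by simpa using hε⟩

theorem norm_one_le_one : ‖(1 : A)‖ ≤ 1 := by
  rcases subsingleton_or_nontrivial A with h | h
  · simp [Subsingleton.elim (1 : A) 0]
  · simp

/-- Adjoining the ambient unit to a non-unital star subalgebra, as a module sum. -/
def withOne (F : NonUnitalStarSubalgebra ℂ A) : NonUnitalStarSubalgebra ℂ A where
  carrier := ↑(F.toSubmodule ⊔ Submodule.span ℂ {(1 : A)})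
  add_mem' {a b} ha hb := Submodule.add_mem _ ha hb
  zero_mem' := Submodule.zero_mem (F.toSubmodule ⊔ Submodule.span ℂ {(1 : A)})
  smul_mem' c {a} ha :=
    Submodule.smul_mem (F.toSubmodule ⊔ Submodule.span ℂ {(1 : A)}) c ha
  star_mem' := by
    intro a ha
    rw [SetLike.mem_coe, Submodule.mem_sup] at ha ⊢
    obtain ⟨f, hf, z, hz, rfl⟩ := ha
    obtain ⟨c, rfl⟩ := Submodule.mem_span_singleton.1 hz
    have hsf : star f ∈ F := star_mem (show f ∈ F from hf)
    refine ⟨star f, hsf, star c • 1,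
      Submodule.mem_span_singleton.2 ⟨star c, rfl⟩, ?_⟩
    simp [star_add, star_smul]
  mul_mem' := by
    intro a b ha hb
    rw [SetLike.mem_coe, Submodule.mem_sup] at ha hb
    obtain ⟨f, hf, z, hz, rfl⟩ := ha
    obtain ⟨c, rfl⟩ := Submodule.mem_span_singleton.1 hz
    obtain ⟨g, hg, w, hw, rfl⟩ := hb
    obtain ⟨d, rfl⟩ := Submodule.mem_span_singleton.1 hw
    have expand : (f + c • 1) * (g + d • 1)
        = f * g + d • f + c • g + (c * d) • (1 : A) := by
      rw [mul_add, add_mul, add_mul, mul_smul_comm, mul_one, smul_mul_assoc, one_mul,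
        smul_mul_smul_comm, one_mul]
      abel
    rw [SetLike.mem_coe, expand]
    have h1 : f * g ∈ F := mul_mem (show f ∈ F from hf) (show g ∈ F from hg)
    refine Submodule.add_mem _ ?_ (Submodule.mem_sup_right
      (Submodule.mem_span_singleton.2 ⟨c * d, rfl⟩))
    refine Submodule.add_mem _ (Submodule.add_mem _ ?_ ?_) ?_ <;>
      [exact Submodule.mem_sup_left h1;
       exact Submodule.mem_sup_left (Submodule.smul_mem _ d hf);
       exact Submodule.mem_sup_left (Submodule.smul_mem _ c hg)]

theorem mem_withOne {F : NonUnitalStarSubalgebra ℂ A} {x : A} :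
    x ∈ withOne F ↔ x ∈ F.toSubmodule ⊔ Submodule.span ℂ {(1 : A)} := ⟨fun h => h, fun h => h⟩

theorem le_withOne (F : NonUnitalStarSubalgebra ℂ A) : F ≤ withOne F := fun x hx =>
  mem_withOne.2 (Submodule.mem_sup_left hx)

theorem one_mem_withOne (F : NonUnitalStarSubalgebra ℂ A) : (1 : A) ∈ withOne F :=
  mem_withOne.2 (Submodule.mem_sup_right (Submodule.mem_span_singleton_self 1))

/-- identification of the subtype of `withOne F` with the subtype of the module sum. -/
def withOneEquiv (F : NonUnitalStarSubalgebra ℂ A) :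
    ↥(withOne F) ≃ₗ[ℂ] ↥(F.toSubmodule ⊔ Submodule.span ℂ {(1 : A)}) where
  toFun x := ⟨x.1, mem_withOne.1 x.2⟩
  invFun x := ⟨x.1, mem_withOne.2 x.2⟩
  left_inv _ := rfl
  right_inv _ := rfl
  map_add' _ _ := rfl
  map_smul' _ _ := rfl

theorem withOne_findim (F : NonUnitalStarSubalgebra ℂ A) [h : FiniteDimensional ℂ ↥F] :
    FiniteDimensional ℂ ↥(withOne F) := by
  have h1 : FiniteDimensional ℂ ↥F.toSubmodule := findim_toSubmodule h
  exact Module.Finite.equiv (withOneEquiv F).symm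

theorem withOne_isClosed (F : NonUnitalStarSubalgebra ℂ A) [h : FiniteDimensional ℂ ↥F] :
    IsClosed ((withOne F : NonUnitalStarSubalgebra ℂ A) : Set A) := by
  have h1 : FiniteDimensional ℂ ↥F.toSubmodule := findim_toSubmodule h
  have h2 := Submodule.closed_of_finiteDimensional (F.toSubmodule ⊔ Submodule.span ℂ {(1 : A)})
  have : ((withOne F : NonUnitalStarSubalgebra ℂ A) : Set A)
      = (↑(F.toSubmodule ⊔ Submodule.span ℂ {(1 : A)}) : Set A) := rfl
  rw [this]; exact h2
end Helpers

section Mono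
variable {A : Type u} [CStarAlgebra A]

theorem subIso_self (S : NonUnitalStarSubalgebra ℂ A) (hS : IsClosed (S : Set A)) (u : A)
    (hu : u ∈ S) (hul : ∀ x ∈ S, u * x = x) (hur : ∀ x ∈ S, x * u = x) :
    @SubIso A _ S ↥S (unitalOfClosed S hS u hu hul hur) := by
  constructor
  exact { toFun := id, invFun := id, left_inv := fun _ => rfl, right_inv := fun _ => rfl,
          map_add' := fun _ _ => rfl, map_mul' := fun _ _ => rfl,
          map_smul' := fun _ _ => rfl, map_star' := fun _ => rfl }

theorem inD_mono {β α : Ordinal.{u}} (hβα : β ≤ α) {A : Type u} [instA : CStarAlgebra A]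
    (hβ : InD β A) : InD α A := by
  rcases eq_or_lt_of_le hβα with rfl | hlt
  · exact hβ
  have hα0 : α ≠ 0 := (lt_of_le_of_lt (zero_le (a := β)) hlt).ne'
  rw [inD_iff] at hβ
  rcases hβ with ⟨rfl, hlfd⟩ | ⟨hβ0, hdec⟩
  · refine inD_ne_zero' hα0 ?_
    intro X ε hε
    obtain ⟨F, hF, happrox⟩ := hlfd X ε hε
    haveI := hF
    have hFle := le_withOne F
    have h1F : (1:A) ∈ withOne F := one_mem_withOne F
    have hclosed : IsClosed ((withOne F : NonUnitalStarSubalgebra ℂ A) : Set A) :=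
      withOne_isClosed F
    letI instF' : CStarAlgebra ↥(withOne F) :=
      unitalOfClosed (withOne F) hclosed 1 h1F (fun x _ => one_mul x) (fun x _ => mul_one x)
    have hclass : DClass α A (withOne F) := by
      refine ⟨hclosed, ⟨⟨0, pos_iff_ne_zero.2 hα0⟩, ↥(withOne F), instF', ?_, ?_⟩⟩
      · exact inD_zero (@isLocFinDim_of_finiteDimensional ↥(withOne F) instF' (withOne_findim F))
      · exact subIso_self _ hclosed 1 h1F _ _
    refine ⟨withOne F, withOne F, withOne F, hclass, hclass, hclass, 1,
      ⟨1, by simp⟩, norm_one_le_one, ?_, ?_, ?_, ?_, ?_, ?_, ?_⟩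
    · intro x _; simpa using hε
    · intro x hx
      obtain ⟨s, hs, hxs⟩ := happrox x hx
      exact ⟨s, hFle hs, by rwa [one_mul]⟩
    · intro x _
      exact ⟨0, (withOne F).zero_mem, by simpa using hε⟩
    · intro x _
      exact ⟨0, (withOne F).zero_mem, by simpa using hε⟩
    · exact fun s hs hns => ⟨s, hs, hns, by simpa using hε⟩
    · exact fun s hs hns => ⟨s, hs, hns, by simpa using hε⟩
    · exact fun e he _ => ⟨e, he, by simpa using hε⟩
  · exact inD_ne_zero' hα0 (decomposes_mono (fun S => dClass_mono hβα S) hdec)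
end Mono

section Pi
variable {k : ℕ} {A : Fin k → Type u} [∀ i, CStarAlgebra (A i)]

/-- The product of a family of non-unital star subalgebras. -/
def piSub (S : ∀ i, NonUnitalStarSubalgebra ℂ (A i)) :
    NonUnitalStarSubalgebra ℂ (∀ i, A i) where
  carrier := Set.pi Set.univ fun i => (S i : Set (A i))
  add_mem' {a b} ha hb i _ := add_mem (ha i trivial) (hb i trivial)
  zero_mem' i _ := zero_mem (S i)
  smul_mem' c {a} ha i _ := SMulMemClass.smul_mem c (ha i trivial)
  mul_mem' {a b} ha hb i _ := mul_mem (ha i trivial) (hb i trivial)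
  star_mem' {a} ha i _ := star_mem (ha i trivial)

theorem mem_piSub {S : ∀ i, NonUnitalStarSubalgebra ℂ (A i)} {x : ∀ i, A i} :
    x ∈ piSub S ↔ ∀ i, x i ∈ S i :=
  ⟨fun h i => h i trivial, fun h i _ => h i⟩

theorem piSub_isClosed (S : ∀ i, NonUnitalStarSubalgebra ℂ (A i))
    (h : ∀ i, IsClosed ((S i : NonUnitalStarSubalgebra ℂ (A i)) : Set (A i))) :
    IsClosed ((piSub S : NonUnitalStarSubalgebra ℂ (∀ i, A i)) : Set (∀ i, A i)) := by
  show IsClosed (Set.pi Set.univ fun i => ((S i : NonUnitalStarSubalgebra ℂ (A i)) : Set (A i)))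
  exact isClosed_set_pi fun i _ => h i

/-- The product subalgebra is star-isomorphic to the product of the subalgebras. -/
def piSubStarEquiv (S : ∀ i, NonUnitalStarSubalgebra ℂ (A i)) :
    ↥(piSub S) ≃⋆ₐ[ℂ] ∀ i, ↥(S i) where
  toFun x i := ⟨x.1 i, x.2 i trivial⟩
  invFun y := ⟨fun i => (y i).1, fun i _ => (y i).2⟩
  left_inv _ := rfl
  right_inv _ := rfl
  map_add' _ _ := rfl
  map_mul' _ _ := rfl
  map_smul' _ _ := rfl
  map_star' _ := rfl

/-- The linear version, for finite-dimensionality transfer. -/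
def piSubLinEquiv (S : ∀ i, NonUnitalStarSubalgebra ℂ (A i)) :
    ↥(piSub S) ≃ₗ[ℂ] ∀ i, ↥(S i) where
  toFun x i := ⟨x.1 i, x.2 i trivial⟩
  invFun y := ⟨fun i => (y i).1, fun i _ => (y i).2⟩
  left_inv _ := rfl
  right_inv _ := rfl
  map_add' _ _ := rfl
  map_smul' _ _ := rfl

/-- Componentwise star-algebra equivalence of products. -/
noncomputable def piCongrStarEquiv {B : Fin k → Type u} [∀ i, CStarAlgebra (B i)]
    {S : ∀ i, NonUnitalStarSubalgebra ℂ (A i)}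
    (e : ∀ i, ↥(S i) ≃⋆ₐ[ℂ] B i) : (∀ i, ↥(S i)) ≃⋆ₐ[ℂ] ∀ i, B i where
  toFun x i := e i (x i)
  invFun y i := (e i).symm (y i)
  left_inv x := by ext i; simp
  right_inv y := by ext i; simp
  map_add' x y := by ext i; simp
  map_mul' x y := by ext i; simp
  map_smul' c x := by ext i; simp
  map_star' x := by ext i; simp [map_star]

end Pi

theorem prodInD (α : Ordinal.{u}) (k : ℕ) (A : Fin k → Type u)
    [instA : ∀ i, CStarAlgebra (A i)]
    (hA : ∀ i, InD α (A i)) : InD α (∀ i, A i) := by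
  classical
  rcases eq_or_ne α 0 with rfl | hα
  · -- locally finite-dimensional case
    refine inD_zero ?_
    intro X ε hε
    have hlfd : ∀ i, IsLocFinDim (A i) := fun i => by
      have := hA i; rw [inD_iff] at this
      rcases this with ⟨_, h⟩ | ⟨h, _⟩
      · exact h
      · exact absurd rfl h
    choose F hF happrox using fun i => hlfd i (X.image fun f => f i) ε hε
    haveI := hF
    refine ⟨piSub F, Module.Finite.equiv (piSubLinEquiv F).symm, ?_⟩
    intro x hx
    choose s hs hslt using fun i => happrox i (x i) (Finset.mem_image_of_mem _ hx)
    exact ⟨fun i => s i, mem_piSub.2 fun i => hs i, (pi_norm_lt_iff hε).2 fun i => hslt i⟩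
  · -- decomposition case
    have hdec : ∀ i, Decomposes (A i) (DClass α (A i)) := fun i => by
      have := hA i; rw [inD_iff] at this
      rcases this with ⟨h, _⟩ | ⟨_, h⟩
      · exact absurd h hα
      · exact h
    refine inD_ne_zero' hα ?_
    intro X ε hε
    choose C D E hC hD hE h hpos hnorm hcomm hmC hmD hmE hsubC hsubD hiv using
      fun i => hdec i (X.image fun f => f i) ε hε
    have hmem : ∀ i, ∀ x ∈ X, x i ∈ X.image fun f => f i :=
      fun i x hx => Finset.mem_image_of_mem _ hx
    -- class membership for the product subalgebras
    have hclass : ∀ (S : ∀ i, NonUnitalStarSubalgebra ℂ (A i)),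
        (∀ i, DClass α (A i) (S i)) → DClass α (∀ i, A i) (piSub S) := by
      intro S hS
      choose β B instB hInD hIso using fun i => (hS i).2
      refine ⟨piSub_isClosed S fun i => (hS i).1, ?_⟩
      letI : ∀ i, CStarAlgebra (B i) := instB
      set γ : Ordinal.{u} := Finset.univ.sup fun i => (β i).1 with hγdef
      have hγ : γ < α := by
        refine Finset.sup_lt_iff ?_ |>.2 fun i _ => (β i).2
        show ⊥ < α
        rw [Ordinal.bot_eq_zero]
        exact pos_iff_ne_zero.2 hα
      refine ⟨⟨γ, hγ⟩, ∀ i, B i, inferInstance, ?_, ?_⟩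
      · exact prodInD γ k B fun i =>
          inD_mono (Finset.le_sup (f := fun i => (β i).1) (Finset.mem_univ i)) (hInD i)
      · exact ⟨(piSubStarEquiv S).trans (piCongrStarEquiv fun i => Classical.choice (hIso i))⟩
    refine ⟨piSub C, piSub D, piSub E, hclass C hC, hclass D hD, hclass E hE,
      fun i => h i, ?_, ?_, ?_, ?_, ?_, ?_, ?_, ?_, ?_⟩
    · choose y hy using hpos
      exact ⟨fun i => y i, funext fun i => hy i⟩
    · exact (pi_norm_le_iff_of_nonneg zero_le_one).2 fun i => hnorm i
    · intro x hx
      exact (pi_norm_lt_iff hε).2 fun i => hcomm i (x i) (hmem i x hx)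
    · intro x hx
      choose s hs hslt using fun i => hmC i (x i) (hmem i x hx)
      exact ⟨fun i => s i, mem_piSub.2 fun i => hs i, (pi_norm_lt_iff hε).2 fun i => hslt i⟩
    · intro x hx
      choose s hs hslt using fun i => hmD i (x i) (hmem i x hx)
      exact ⟨fun i => s i, mem_piSub.2 fun i => hs i, (pi_norm_lt_iff hε).2 fun i => hslt i⟩
    · intro x hx
      choose s hs hslt using fun i => hmE i (x i) (hmem i x hx)
      exact ⟨fun i => s i, mem_piSub.2 fun i => hs i, (pi_norm_lt_iff hε).2 fun i => hslt i⟩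
    · intro s hs hs1
      choose t ht ht1 htlt using fun i =>
        hsubC i (s i) (mem_piSub.1 hs i) ((norm_le_pi_norm s i).trans hs1)
      exact ⟨fun i => t i, mem_piSub.2 fun i => ht i,
        (pi_norm_le_iff_of_nonneg zero_le_one).2 fun i => ht1 i,
        (pi_norm_lt_iff hε).2 fun i => htlt i⟩
    · intro s hs hs1
      choose t ht ht1 htlt using fun i =>
        hsubD i (s i) (mem_piSub.1 hs i) ((norm_le_pi_norm s i).trans hs1)
      exact ⟨fun i => t i, mem_piSub.2 fun i => ht i,
        (pi_norm_le_iff_of_nonneg zero_le_one).2 fun i => ht1 i,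
        (pi_norm_lt_iff hε).2 fun i => htlt i⟩
    · intro e he he1
      choose s hs hslt using fun i =>
        hiv i (e i) (mem_piSub.1 he i) ((norm_le_pi_norm e i).trans he1)
      exact ⟨fun i => s i, mem_piSub.2 fun i => hs i, (pi_norm_lt_iff hε).2 fun i => hslt i⟩
termination_by α
decreasing_by exact hγ
open scoped CStarAlgebra
section Cap
variable {A : Type u} [CStarAlgebra A]

/-- The capping function. -/
noncomputable def g0 : ℝ → ℝ := fun s => (Real.sqrt (max |s| 1))⁻¹ - 1

theorem sqrt_max_ge_one (s : ℝ) : (1:ℝ) ≤ Real.sqrt (max |s| 1) := by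
  have := Real.sqrt_le_sqrt (le_max_right |s| 1)
  rwa [Real.sqrt_one] at this

theorem g0_cont : Continuous g0 := by
  have h1 : Continuous fun s : ℝ => Real.sqrt (max |s| 1) :=
    (continuous_abs.max continuous_const).sqrt
  exact (h1.inv₀ fun s => by have := sqrt_max_ge_one s; positivity).sub continuous_const

theorem g0_zero : g0 0 = 0 := by simp [g0]

theorem g0_eqOn {s : ℝ} (hs : |s| ≤ 1) : g0 s = 0 := by
  simp [g0, max_eq_right hs]

theorem one_add_g0 (s : ℝ) : 1 + g0 s = (Real.sqrt (max |s| 1))⁻¹ := by simp [g0]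

/-- the elements of the quasispectrum are bounded by the norm. -/
theorem quasi_bound {Z : Type u} [CStarAlgebra Z] (a : Z) :
    ∀ x ∈ quasispectrum ℝ a, |x| ≤ ‖a‖ := by
  intro x hx
  rw [quasispectrum_eq_spectrum_union_zero] at hx
  rcases hx with hx | hx
  · rcases subsingleton_or_nontrivial Z with hs | hn
    · rw [spectrum.mem_iff] at hx
      exact absurd (isUnit_of_subsingleton _) hx
    · exact_mod_cast spectrum.norm_le_norm_of_mem hx
  · simp only [Set.mem_singleton_iff] at hx
    simp [hx]

theorem cfcₙ_mem_closed {E : NonUnitalStarSubalgebra ℂ A} (hE : IsClosed (E : Set A))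
    {y : A} (hy : y ∈ E) (hsa : IsSelfAdjoint y) (f : ℝ → ℝ) (hf : Continuous f)
    (hf0 : f 0 = 0) : cfcₙ f y ∈ E := by
  haveI : IsClosed (E : Set A) := hE
  set y' : ↥E := ⟨y, hy⟩ with hy'
  have hsa' : IsSelfAdjoint y' := Subtype.ext hsa
  have hmap := NonUnitalStarAlgHomClass.map_cfcₙ (R := ℝ) (S := ℂ)
    (NonUnitalStarSubalgebraClass.subtype E) f y' hf.continuousOn hf0
    continuous_subtype_val hsa' (by exact hsa)
  have h3 : cfcₙ f ((NonUnitalStarSubalgebraClass.subtype E) y') = cfcₙ f y := rfl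
  have h4 : cfcₙ f y = (NonUnitalStarSubalgebraClass.subtype E) (cfcₙ f y') :=
    (h3.symm.trans hmap.symm)
  rw [h4]
  exact (cfcₙ f y').2

/-- The capped element: `ê ∈ E` has norm at most `1` and has the same image as `e` under
any star homomorphism `φ` with `‖φ e‖ ≤ 1`. -/
theorem cap {E : NonUnitalStarSubalgebra ℂ A} (hE : IsClosed (E : Set A)) {e : A}
    (he : e ∈ E) :
    ∃ c ∈ E, ‖c‖ ≤ 1 ∧ ∀ (Z : Type u) [CStarAlgebra Z] (φ : A →⋆ₙₐ[ℂ] Z),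
      ‖φ e‖ ≤ 1 → φ c = φ e := by
  set y := star e * e with hydef
  have hy : y ∈ E := mul_mem (star_mem he) he
  have hsa : IsSelfAdjoint y := IsSelfAdjoint.star_mul_self e
  set u := cfcₙ g0 y with hudef
  have hu : u ∈ E := cfcₙ_mem_closed hE hy hsa g0 g0_cont g0_zero
  have husa : IsSelfAdjoint u := cfcₙ_predicate g0 y
  refine ⟨e + e * u, add_mem he (mul_mem he hu), ?_, ?_⟩
  · -- norm bound
    have hstar : star (e + e * u) = star e + u * star e := by
      rw [star_add, star_mul, husa.star_eq]
    have expand : star (e + e * u) * (e + e * u)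
        = y + (y * u + (u * y + u * (y * u))) := by
      rw [hstar, hydef]
      noncomm_ring
    have hg0c : ContinuousOn g0 (quasispectrum ℝ y) := g0_cont.continuousOn
    have hid : ContinuousOn (fun s : ℝ => s) (quasispectrum ℝ y) := continuousOn_id
    have hyu : y * u = cfcₙ (fun s => s * g0 s) y := by
      rw [cfcₙ_mul (fun s => s) g0 y hid rfl hg0c g0_zero, cfcₙ_id' ℝ y]
    have huy : u * y = cfcₙ (fun s => g0 s * s) y := by
      rw [cfcₙ_mul g0 (fun s => s) y hg0c g0_zero hid rfl, cfcₙ_id' ℝ y]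
    have huyu : u * (y * u) = cfcₙ (fun s => g0 s * (s * g0 s)) y := by
      rw [cfcₙ_mul g0 (fun s => s * g0 s) y hg0c g0_zero
        (ContinuousOn.mul hid hg0c) (by simp [g0_zero]), ← hyu]
    have hq : star (e + e * u) * (e + e * u)
        = cfcₙ (fun s => s + (s * g0 s + (g0 s * s + g0 s * (s * g0 s)))) y := by
      rw [cfcₙ_add (fun s => s)
          (fun s => s * g0 s + (g0 s * s + g0 s * (s * g0 s))) y hid rfl
          (by exact ((hid.mul hg0c).add ((hg0c.mul hid).add
            (hg0c.mul (hid.mul hg0c)))) ) (by simp [g0_zero]),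
        cfcₙ_add (fun s => s * g0 s) (fun s => g0 s * s + g0 s * (s * g0 s)) y
          (hid.mul hg0c) (by simp [g0_zero])
          ((hg0c.mul hid).add (hg0c.mul (hid.mul hg0c))) (by simp [g0_zero]),
        cfcₙ_add (fun s => g0 s * s) (fun s => g0 s * (s * g0 s)) y
          (hg0c.mul hid) (by simp [g0_zero])
          (hg0c.mul (hid.mul hg0c)) (by simp [g0_zero]),
        cfcₙ_id' ℝ y, ← hyu, ← huy, ← huyu]
      exact expand
    have hbound : ∀ s ∈ quasispectrum ℝ y,
        |s + (s * g0 s + (g0 s * s + g0 s * (s * g0 s)))| ≤ 1 := by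
      intro s _
      have key : s + (s * g0 s + (g0 s * s + g0 s * (s * g0 s)))
          = s * ((1 + g0 s) * (1 + g0 s)) := by ring
      have hmax : (0:ℝ) < max |s| 1 := lt_of_lt_of_le one_pos (le_max_right _ _)
      rw [key, one_add_g0, ← mul_inv, Real.mul_self_sqrt hmax.le, abs_mul, abs_inv,
        abs_of_pos hmax, ← div_eq_mul_inv]
      exact (div_le_one hmax).2 (le_max_left _ _)
    have hn : ‖star (e + e * u) * (e + e * u)‖ ≤ 1 := by
      rw [hq]; exact norm_cfcₙ_le hbound
    rw [CStarRing.norm_star_mul_self] at hn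
    nlinarith [norm_nonneg (e + e * u)]
  · intro Z instZ φ hφe
    have hφc : Continuous φ :=
      AddMonoidHomClass.continuous_of_bound φ 1
        (by simpa only [one_mul] using fun a => NonUnitalStarAlgHom.norm_apply_le φ a)
    have hphiy : φ y = star (φ e) * φ e := by rw [hydef, map_mul, map_star]
    have hφu : φ u = cfcₙ g0 (φ y) :=
      NonUnitalStarAlgHomClass.map_cfcₙ (S := ℂ) φ g0 y g0_cont.continuousOn g0_zero
        hφc hsa (hsa.map φ)
    have hnorm_y : ‖φ y‖ ≤ 1 := by
      rw [hphiy, CStarRing.norm_star_mul_self]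
      nlinarith [norm_nonneg (φ e)]
    have hg0y : cfcₙ g0 (φ y) = 0 := by
      have h5 : cfcₙ g0 (φ y) = cfcₙ (fun _ : ℝ => 0) (φ y) :=
        cfcₙ_congr fun s hs => g0_eqOn ((quasi_bound (φ y) s hs).trans hnorm_y)
      rw [h5, cfcₙ_const_zero]
    rw [map_add, map_mul, hφu, hg0y, mul_zero, add_zero]
end Cap

set_option maxHeartbeats 2000000 in
theorem pushforward (α : Ordinal.{u}) {B Z : Type u} [instB : CStarAlgebra B]
    [instZ : CStarAlgebra Z] (φ : B →⋆ₙₐ[ℂ] Z) (hφ1 : φ (1 : B) = 1)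
    (hφd : DenseRange φ) (hB : InD α B) : InD α Z := by
  classical
  have hφn : ∀ a : B, ‖φ a‖ ≤ ‖a‖ := fun a => NonUnitalStarAlgHom.norm_apply_le φ a
  have hφc : Continuous φ :=
    AddMonoidHomClass.continuous_of_bound φ 1 (by simpa only [one_mul] using hφn)
  have happ : ∀ (δ : ℝ), 0 < δ → ∀ z : Z, ∃ b : B, ‖z - φ b‖ < δ := by
    intro δ hδ z
    obtain ⟨b, hb⟩ := Metric.denseRange_iff.1 hφd z δ hδ
    exact ⟨b, by rwa [dist_eq_norm] at hb⟩
  rw [inD_iff] at hB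
  rcases hB with ⟨rfl, hlfd⟩ | ⟨hα, hdec⟩
  · -- locally finite-dimensional case
    refine inD_zero ?_
    intro X ε hε
    have hε2 : 0 < ε / 2 := by linarith
    choose b hb using happ (ε / 2) hε2
    obtain ⟨F, hF, happrox⟩ := hlfd (X.image b) (ε / 2) hε2
    haveI := hF
    refine ⟨F.map φ, ?_, ?_⟩
    · -- finite-dimensionality of the image
      let l : ↥F →ₗ[ℂ] ↥(F.map φ) :=
        { toFun := fun x => ⟨φ x.1, NonUnitalStarSubalgebra.mem_map.2 ⟨x.1, x.2, rfl⟩⟩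
          map_add' := fun x y => Subtype.ext (map_add φ x.1 y.1)
          map_smul' := fun c x => Subtype.ext (map_smul φ c x.1) }
      have hsurj : Function.Surjective l := by
        rintro ⟨z, hz⟩
        obtain ⟨s, hs, rfl⟩ := NonUnitalStarSubalgebra.mem_map.1 hz
        exact ⟨⟨s, hs⟩, rfl⟩
      exact Module.Finite.of_surjective l hsurj
    · intro x hx
      obtain ⟨s, hs, hlt⟩ := happrox (b x) (Finset.mem_image_of_mem b hx)
      refine ⟨φ s, NonUnitalStarSubalgebra.mem_map.2 ⟨s, hs, rfl⟩, ?_⟩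
      calc ‖x - φ s‖ ≤ ‖x - φ (b x)‖ + ‖φ (b x) - φ s‖ := by
            simpa using norm_add_le (x - φ (b x)) (φ (b x) - φ s)
        _ ≤ ‖x - φ (b x)‖ + ‖b x - s‖ := by
            rw [← map_sub]; exact add_le_add le_rfl (hφn _)
        _ < ε / 2 + ε / 2 := add_lt_add (hb x) hlt
        _ = ε := by ring
  · -- decomposition case
    refine inD_ne_zero' hα ?_
    -- the class pushforward
    have hclass : ∀ S : NonUnitalStarSubalgebra ℂ B, DClass α B S →
        DClass α Z ((S.map φ).topologicalClosure) := by
      intro S hS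
      obtain ⟨hScl, ⟨γ, hγ⟩, Bc, instBc, hInDc, hIso⟩ := hS
      have ec : ↥S ≃⋆ₐ[ℂ] Bc := Classical.choice hIso
      set u₀ : B := ((ec.symm 1 : ↥S) : B) with hu₀def
      have hu₀S : u₀ ∈ S := (ec.symm 1).2
      have hunit_l : ∀ s ∈ S, u₀ * s = s := by
        intro s hs
        have h1 : ec.symm 1 * (⟨s, hs⟩ : ↥S) = ⟨s, hs⟩ := by
          conv_lhs => rw [show (⟨s, hs⟩ : ↥S) = ec.symm (ec ⟨s, hs⟩) by simp]
          rw [← map_mul, one_mul]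
          simp
        exact congrArg Subtype.val h1
      have hunit_r : ∀ s ∈ S, s * u₀ = s := by
        intro s hs
        have h1 : (⟨s, hs⟩ : ↥S) * ec.symm 1 = ⟨s, hs⟩ := by
          conv_lhs => rw [show (⟨s, hs⟩ : ↥S) = ec.symm (ec ⟨s, hs⟩) by simp]
          rw [← map_mul, mul_one]
          simp
        exact congrArg Subtype.val h1
      set T := (S.map φ).topologicalClosure with hTdef
      have hTcl : IsClosed (T : Set Z) := (S.map φ).isClosed_topologicalClosure
      have hsub : ∀ s ∈ S, φ s ∈ T := fun s hs =>
        (S.map φ).le_topologicalClosure (NonUnitalStarSubalgebra.mem_map.2 ⟨s, hs, rfl⟩)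
      have hu : φ u₀ ∈ T := hsub u₀ hu₀S
      have hTset : (T : Set Z) ⊆ {z | φ u₀ * z = z ∧ z * φ u₀ = z} := by
        have hcoe : (T : Set Z) = closure (S.map φ : Set Z) := rfl
        rw [hcoe]
        apply closure_minimal
        · rintro z hz
          obtain ⟨s, hs, rfl⟩ := NonUnitalStarSubalgebra.mem_map.1 hz
          exact ⟨by rw [← map_mul, hunit_l s hs], by rw [← map_mul, hunit_r s hs]⟩
        · have h1 : IsClosed {z : Z | φ u₀ * z = z} :=
            isClosed_eq (continuous_const.mul continuous_id) continuous_id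
          have h2 : IsClosed {z : Z | z * φ u₀ = z} :=
            isClosed_eq (continuous_id.mul continuous_const) continuous_id
          exact h1.inter h2
      have hul : ∀ z ∈ (T : Set Z), φ u₀ * z = z := fun z hz => (hTset hz).1
      have hur : ∀ z ∈ (T : Set Z), z * φ u₀ = z := fun z hz => (hTset hz).2
      letI instT : CStarAlgebra ↥T := unitalOfClosed T hTcl (φ u₀) hu hul hur
      -- the pushed homomorphism
      let ψ : Bc →⋆ₙₐ[ℂ] ↥T :=
        { toFun := fun b => ⟨φ (ec.symm b : ↥S), hsub _ (ec.symm b).2⟩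
          map_add' := fun a b' => Subtype.ext <| by
            show φ ((ec.symm (a + b') : ↥S) : B) = φ (ec.symm a : ↥S) + φ (ec.symm b' : ↥S)
            rw [map_add, ← map_add φ]
            rfl
          map_mul' := fun a b' => Subtype.ext <| by
            show φ ((ec.symm (a * b') : ↥S) : B) = φ (ec.symm a : ↥S) * φ (ec.symm b' : ↥S)
            rw [map_mul, ← map_mul φ]
            rfl
          map_smul' := fun c a => Subtype.ext <| by
            show φ ((ec.symm (c • a) : ↥S) : B) = c • φ (ec.symm a : ↥S)
            rw [map_smul, ← map_smul φ]
            rfl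
          map_zero' := Subtype.ext <| by
            show φ ((ec.symm 0 : ↥S) : B) = (0 : Z)
            rw [map_zero]
            exact map_zero φ
          map_star' := fun a => Subtype.ext <| by
            show φ ((ec.symm (star a) : ↥S) : B) = star (φ (ec.symm a : ↥S))
            rw [map_star, ← map_star φ]
            rfl }
      have hψ1 : ψ 1 = 1 := rfl
      have hψd : DenseRange ψ := by
        rw [Metric.denseRange_iff]
        intro x r hr
        have hx : x.1 ∈ closure (S.map φ : Set Z) := x.2
        obtain ⟨w, hw, hdist⟩ := Metric.mem_closure_iff.1 hx r hr
        obtain ⟨s, hs, rfl⟩ := NonUnitalStarSubalgebra.mem_map.1 hw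
        refine ⟨ec ⟨s, hs⟩, ?_⟩
        have : ψ (ec ⟨s, hs⟩) = ⟨φ s, hsub s hs⟩ := Subtype.ext <| by
          show φ ((ec.symm (ec ⟨s, hs⟩) : ↥S) : B) = φ s
          simp
        rw [this, Subtype.dist_eq]
        exact hdist
      exact ⟨hTcl, ⟨γ, hγ⟩, ↥T, instT, pushforward γ ψ hψ1 hψd hInDc,
        subIso_self T hTcl (φ u₀) hu hul hur⟩
    intro X ε hε
    have hε8 : 0 < ε / 8 := by linarith
    choose b hb using happ (ε / 8) hε8
    obtain ⟨C, D, E, hC, hD, hE, h, ⟨x₀, hx₀⟩, hh1, hcomm, hmC, hmD, hmE, hsubC, hsubD, hiv⟩ :=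
      hdec (X.image b) (ε / 8) hε8
    have hφh1 : ‖φ h‖ ≤ 1 := (hφn h).trans hh1
    have hφ1h : φ (1 - h) = 1 - φ h := by rw [map_sub, hφ1]
    have hφ1hn : ‖(1 : Z) - φ h‖ ≤ 2 := by
      calc ‖(1 : Z) - φ h‖ ≤ ‖(1 : Z)‖ + ‖φ h‖ := norm_sub_le _ _
        _ ≤ 1 + 1 := add_le_add norm_one_le_one hφh1
        _ = 2 := by ring
    have hbmem : ∀ x ∈ X, b x ∈ X.image b := fun x hx => Finset.mem_image_of_mem b hx
    -- the capping construction, used for `SubsetEps` and condition (iv)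
    have hcapE : ∀ z ∈ ((E.map φ).topologicalClosure : Set Z), ‖z‖ ≤ 1 →
        ∃ c ∈ E, ‖c‖ ≤ 1 ∧ ‖z - φ c‖ < 2 * (ε / 8) := by
      intro z hz hz1
      obtain ⟨w, hw, hdist⟩ := Metric.mem_closure_iff.1 (show z ∈ closure (E.map φ : Set Z)
        from hz) (ε / 8) hε8
      obtain ⟨e, he, rfl⟩ := NonUnitalStarSubalgebra.mem_map.1 hw
      rw [dist_eq_norm] at hdist
      have hφen : ‖φ e‖ < 1 + ε / 8 := by
        calc ‖φ e‖ = ‖φ e - z + z‖ := by rw [sub_add_cancel]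
          _ ≤ ‖φ e - z‖ + ‖z‖ := norm_add_le _ _
          _ < ε / 8 + 1 := by
              rw [norm_sub_rev]
              exact add_lt_add_of_lt_of_le hdist hz1
          _ = 1 + ε / 8 := by ring
      set c₁ : ℂ := (((1 : ℝ) + ε / 8 : ℝ) : ℂ)⁻¹ with hc₁def
      have hpos : (0 : ℝ) < 1 + ε / 8 := by linarith
      have hc₁n : ‖c₁‖ = (1 + ε / 8)⁻¹ := by
        rw [hc₁def, norm_inv, Complex.norm_real, Real.norm_eq_abs, abs_of_pos hpos]
      set e₁ : B := c₁ • e with he₁def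
      have he₁E : e₁ ∈ E := SMulMemClass.smul_mem c₁ he
      have hφe₁ : ‖φ e₁‖ ≤ 1 := by
        rw [he₁def, map_smul, norm_smul, hc₁n]
        have h7 : (1 + ε / 8)⁻¹ * ‖φ e‖ ≤ (1 + ε / 8)⁻¹ * (1 + ε / 8) :=
          mul_le_mul_of_nonneg_left hφen.le (inv_nonneg.2 hpos.le)
        rwa [inv_mul_cancel₀ hpos.ne'] at h7
      obtain ⟨c, hcE, hc1, hcφ⟩ := cap hE.1 he₁E
      refine ⟨c, hcE, hc1, ?_⟩
      have hφc' : φ c = φ e₁ := hcφ Z φ hφe₁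
      have he₁φ : ‖φ e - φ e₁‖ ≤ ε / 8 := by
        rw [he₁def, map_smul]
        have : φ e - c₁ • φ e = ((1 : ℂ) - c₁) • φ e := by rw [sub_smul, one_smul]
        rw [this, norm_smul]
        have h1c : ‖(1 : ℂ) - c₁‖ = 1 - (1 + ε / 8)⁻¹ := by
          rw [hc₁def]
          rw [show (1 : ℂ) - (((1 : ℝ) + ε / 8 : ℝ) : ℂ)⁻¹
            = (((1 - (1 + ε / 8)⁻¹ : ℝ) : ℂ)) by push_cast; ring]
          rw [Complex.norm_real, Real.norm_eq_abs, abs_of_nonneg]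
          have : (1 + ε / 8)⁻¹ ≤ 1 := by
            rw [inv_le_one_iff₀]; right; linarith
          linarith
        rw [h1c]
        have hfactor : (1 - (1 + ε / 8)⁻¹) * (1 + ε / 8) = ε / 8 := by
          field_simp
          ring
        calc (1 - (1 + ε / 8)⁻¹) * ‖φ e‖ ≤ (1 - (1 + ε / 8)⁻¹) * (1 + ε / 8) := by
              apply mul_le_mul_of_nonneg_left hφen.le
              have : (1 + ε / 8)⁻¹ ≤ 1 := by rw [inv_le_one_iff₀]; right; linarith
              linarith
          _ = ε / 8 := hfactor
      calc ‖z - φ c‖ = ‖(z - φ e) + (φ e - φ e₁)‖ := by rw [hφc', sub_add_sub_cancel]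
        _ ≤ ‖z - φ e‖ + ‖φ e - φ e₁‖ := norm_add_le _ _
        _ < ε / 8 + ε / 8 := by
            exact add_lt_add_of_lt_of_le hdist he₁φ
        _ = 2 * (ε / 8) := by ring
    refine ⟨(C.map φ).topologicalClosure, (D.map φ).topologicalClosure,
      (E.map φ).topologicalClosure, hclass C hC, hclass D hD, hclass E hE, φ h,
      ⟨φ x₀, by rw [hx₀, map_mul, map_star]⟩, hφh1, ?_, ?_, ?_, ?_, ?_, ?_, ?_⟩
    · -- commutator
      intro x hx
      have key : φ h * x - x * φ h
          = φ h * (x - φ (b x)) + φ (h * b x - b x * h) + (φ (b x) - x) * φ h := by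
        rw [map_sub, map_mul, map_mul]; noncomm_ring
      rw [key]
      calc ‖φ h * (x - φ (b x)) + φ (h * b x - b x * h) + (φ (b x) - x) * φ h‖
          ≤ ‖φ h * (x - φ (b x))‖ + ‖φ (h * b x - b x * h)‖ + ‖(φ (b x) - x) * φ h‖ :=
            norm_add₃_le
        _ ≤ ‖φ h‖ * ‖x - φ (b x)‖ + ‖h * b x - b x * h‖ + ‖φ (b x) - x‖ * ‖φ h‖ := by
            gcongr
            · exact norm_mul_le _ _
            · exact hφn _
            · exact norm_mul_le _ _
        _ < 1 * (ε / 8) + ε / 8 + (ε / 8) * 1 := by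
            have h1 := hb x
            have h2 := hcomm (b x) (hbmem x hx)
            have h3 : ‖φ (b x) - x‖ < ε / 8 := by rwa [norm_sub_rev]
            have h4 := norm_nonneg (x - φ (b x))
            have h5 := norm_nonneg (φ (b x) - x)
            have h6 := norm_nonneg (φ h)
            nlinarith
        _ < ε := by linarith
    · -- hx ∈ε C'
      intro x hx
      obtain ⟨s, hs, hlt⟩ := hmC (b x) (hbmem x hx)
      refine ⟨φ s, (C.map φ).le_topologicalClosure
        (NonUnitalStarSubalgebra.mem_map.2 ⟨s, hs, rfl⟩), ?_⟩
      have key : φ h * x - φ s = φ h * (x - φ (b x)) + φ (h * b x - s) := by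
        rw [map_sub, map_mul]; noncomm_ring
      rw [key]
      calc ‖φ h * (x - φ (b x)) + φ (h * b x - s)‖
          ≤ ‖φ h‖ * ‖x - φ (b x)‖ + ‖h * b x - s‖ :=
            (norm_add_le _ _).trans (add_le_add (norm_mul_le _ _) (hφn _))
        _ < 1 * (ε / 8) + ε / 8 := by
            have h1 := hb x
            have h4 := norm_nonneg (x - φ (b x))
            nlinarith
        _ < ε := by linarith
    · -- (1-h)x ∈ε D'
      intro x hx
      obtain ⟨s, hs, hlt⟩ := hmD (b x) (hbmem x hx)
      refine ⟨φ s, (D.map φ).le_topologicalClosure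
        (NonUnitalStarSubalgebra.mem_map.2 ⟨s, hs, rfl⟩), ?_⟩
      have key : (1 - φ h) * x - φ s = (1 - φ h) * (x - φ (b x)) + φ ((1 - h) * b x - s) := by
        rw [map_sub, map_mul, hφ1h]; noncomm_ring
      rw [key]
      calc ‖(1 - φ h) * (x - φ (b x)) + φ ((1 - h) * b x - s)‖
          ≤ ‖(1 : Z) - φ h‖ * ‖x - φ (b x)‖ + ‖(1 - h) * b x - s‖ :=
            (norm_add_le _ _).trans (add_le_add (norm_mul_le _ _) (hφn _))
        _ < 2 * (ε / 8) + ε / 8 := by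
            have h1 := hb x
            have h4 := norm_nonneg (x - φ (b x))
            nlinarith
        _ < ε := by linarith
    · -- h(1-h)x ∈ε E'
      intro x hx
      obtain ⟨s, hs, hlt⟩ := hmE (b x) (hbmem x hx)
      refine ⟨φ s, (E.map φ).le_topologicalClosure
        (NonUnitalStarSubalgebra.mem_map.2 ⟨s, hs, rfl⟩), ?_⟩
      have key : φ h * ((1 - φ h) * x) - φ s
          = φ h * ((1 - φ h) * (x - φ (b x))) + φ (h * ((1 - h) * b x) - s) := by
        rw [map_sub, map_mul, map_mul, hφ1h]; noncomm_ring
      rw [key]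
      calc ‖φ h * ((1 - φ h) * (x - φ (b x))) + φ (h * ((1 - h) * b x) - s)‖
          ≤ ‖φ h‖ * (‖(1 : Z) - φ h‖ * ‖x - φ (b x)‖) + ‖h * ((1 - h) * b x) - s‖ := by
            refine (norm_add_le _ _).trans (add_le_add ?_ (hφn _))
            exact (norm_mul_le _ _).trans (mul_le_mul_of_nonneg_left (norm_mul_le _ _)
              (norm_nonneg _))
        _ < 1 * (2 * (ε / 8)) + ε / 8 := by
            have k0 : ‖(1 : Z) - φ h‖ * ‖x - φ (b x)‖ ≤ 2 * ‖x - φ (b x)‖ :=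
              mul_le_mul_of_nonneg_right hφ1hn (norm_nonneg _)
            have k1 : ‖φ h‖ * (‖(1 : Z) - φ h‖ * ‖x - φ (b x)‖) ≤ 1 * (2 * ‖x - φ (b x)‖) :=
              mul_le_mul hφh1 k0 (by positivity) (by norm_num)
            have h1 := hb x
            linarith
        _ < ε := by linarith
    · -- E' ⊆ε C'
      intro z hz hz1
      obtain ⟨c, hcE, hc1, hclt⟩ := hcapE z hz hz1
      obtain ⟨t, htC, ht1, htlt⟩ := hsubC c hcE hc1
      refine ⟨φ t, (C.map φ).le_topologicalClosure
        (NonUnitalStarSubalgebra.mem_map.2 ⟨t, htC, rfl⟩), (hφn t).trans ht1, ?_⟩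
      calc ‖z - φ t‖ = ‖(z - φ c) + φ (c - t)‖ := by rw [map_sub, sub_add_sub_cancel]
        _ ≤ ‖z - φ c‖ + ‖c - t‖ := (norm_add_le _ _).trans (add_le_add le_rfl (hφn _))
        _ < 2 * (ε / 8) + ε / 8 := add_lt_add hclt htlt
        _ < ε := by linarith
    · -- E' ⊆ε D'
      intro z hz hz1
      obtain ⟨c, hcE, hc1, hclt⟩ := hcapE z hz hz1
      obtain ⟨t, htD, ht1, htlt⟩ := hsubD c hcE hc1
      refine ⟨φ t, (D.map φ).le_topologicalClosure
        (NonUnitalStarSubalgebra.mem_map.2 ⟨t, htD, rfl⟩), (hφn t).trans ht1, ?_⟩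
      calc ‖z - φ t‖ = ‖(z - φ c) + φ (c - t)‖ := by rw [map_sub, sub_add_sub_cancel]
        _ ≤ ‖z - φ c‖ + ‖c - t‖ := (norm_add_le _ _).trans (add_le_add le_rfl (hφn _))
        _ < 2 * (ε / 8) + ε / 8 := add_lt_add hclt htlt
        _ < ε := by linarith
    · -- condition (iv)
      intro z hz hz1
      obtain ⟨c, hcE, hc1, hclt⟩ := hcapE z hz hz1
      obtain ⟨s, hsE, hslt⟩ := hiv c hcE hc1
      refine ⟨φ s, (E.map φ).le_topologicalClosure
        (NonUnitalStarSubalgebra.mem_map.2 ⟨s, hsE, rfl⟩), ?_⟩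
      have key : φ h * z - φ s = φ h * (z - φ c) + φ (h * c - s) := by
        rw [map_sub, map_mul]; noncomm_ring
      rw [key]
      calc ‖φ h * (z - φ c) + φ (h * c - s)‖
          ≤ ‖φ h‖ * ‖z - φ c‖ + ‖h * c - s‖ :=
            (norm_add_le _ _).trans (add_le_add (norm_mul_le _ _) (hφn _))
        _ < 1 * (2 * (ε / 8)) + ε / 8 := by
            have h4 := norm_nonneg (z - φ c)
            nlinarith
        _ < ε := by linarith

termination_by α
decreasing_by exact hγ

/-- Lemma 2.6 of the paper.  Let `A₁, …, A_k` be unital C*-algebras and `α`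
an ordinal.  Then the direct sum `A₁ ⊕ ⋯ ⊕ A_k` (with coordinatewise operations and supremum
norm) is in the class `D_α` if and only if each `A_i` is in `D_α`. -/
theorem directSum_inD_iff (α : Ordinal.{u}) (k : ℕ) (A : Fin k → Type u)
    [∀ i, CStarAlgebra (A i)] :
    InD α (∀ i, A i) ↔ ∀ i, InD α (A i) := by
  constructor
  · intro hp i
    let φ : (∀ j, A j) →⋆ₙₐ[ℂ] A i :=
      { toFun := fun f => f i
        map_add' := fun _ _ => rfl
        map_mul' := fun _ _ => rfl
        map_smul' := fun _ _ => rfl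
        map_zero' := rfl
        map_star' := fun _ => rfl }
    have hsurj : Function.Surjective φ := fun a =>
      ⟨Function.update 0 i a, Function.update_self i a 0⟩
    exact pushforward α φ rfl hsurj.denseRange hp
  · intro h
    exact prodInD α k A h
end

section
/- For any ordinal α, any unital C*-algebra that is locally in the class D_α is itself in D_α. Here A is locally in D_α if for every finite subset X of A and every ε > 0 there is a C*-subalgebra C of A belonging to D_α such that x ∈_ε C for all x ∈ X. -/
universe u

variable {A B : Type u} [CStarAlgebra A] [CStarAlgebra B]

noncomputable def embed (C : NonUnitalStarSubalgebra ℂ A) (φ : B ≃⋆ₐ[ℂ] C) : B →⋆ₙₐ[ℂ] A :=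
  (NonUnitalStarSubalgebraClass.subtype C).comp (φ : B →⋆ₙₐ[ℂ] C)

lemma embed_apply (C : NonUnitalStarSubalgebra ℂ A) (φ : B ≃⋆ₐ[ℂ] C) (b : B) :
    embed C φ b = (φ b : A) := rfl

lemma embed_injective (C : NonUnitalStarSubalgebra ℂ A) (φ : B ≃⋆ₐ[ℂ] C) :
    Function.Injective (embed C φ) :=
  Subtype.val_injective.comp (EquivLike.injective φ)

lemma embed_norm (C : NonUnitalStarSubalgebra ℂ A) (φ : B ≃⋆ₐ[ℂ] C) (b : B) :
    ‖embed C φ b‖ = ‖b‖ :=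
  NonUnitalStarAlgHom.norm_map _ (embed_injective C φ) b

lemma map_isClosed (f : B →⋆ₙₐ[ℂ] A) (hf : Function.Injective f)
    (S : NonUnitalStarSubalgebra ℂ B) (hS : IsClosed (S : Set B)) :
    IsClosed ((S.map f : NonUnitalStarSubalgebra ℂ A) : Set A) := by
  rw [NonUnitalStarSubalgebra.coe_map]
  exact (NonUnitalStarAlgHom.isometry f hf).isClosedEmbedding.isClosedMap _ hS

noncomputable def mapEquiv (f : B →⋆ₙₐ[ℂ] A) (hf : Function.Injective f)
    (S : NonUnitalStarSubalgebra ℂ B) : S ≃⋆ₐ[ℂ] (S.map f) :=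
  StarAlgEquiv.ofBijective
    (NonUnitalStarAlgHom.codRestrict (f.comp (NonUnitalStarSubalgebraClass.subtype S))
      (S.map f) (fun x => NonUnitalStarSubalgebra.mem_map.mpr ⟨x, x.2, rfl⟩))
    ⟨fun x y hxy => Subtype.ext (hf (congrArg Subtype.val hxy)),
     fun y => by
      obtain ⟨x, hx, hfx⟩ := NonUnitalStarSubalgebra.mem_map.mp y.2
      exact ⟨⟨x, hx⟩, Subtype.ext hfx⟩⟩

lemma map_finiteDimensional {A B : Type u} [CStarAlgebra A] [CStarAlgebra B]
    (f : B →⋆ₙₐ[ℂ] A) (S : NonUnitalStarSubalgebra ℂ B) (h : FiniteDimensional ℂ S) :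
    FiniteDimensional ℂ (S.map f) := by
  let l : S →ₗ[ℂ] (S.map f) :=
    { toFun := fun x => ⟨f x, NonUnitalStarSubalgebra.mem_map.mpr ⟨x, x.2, rfl⟩⟩
      map_add' := fun x y => Subtype.ext (by simp)
      map_smul' := fun r x => Subtype.ext (by simp) }
  have hsurj : Function.Surjective l := fun y => by
    obtain ⟨x, hx, hfx⟩ := NonUnitalStarSubalgebra.mem_map.mp y.2
    exact ⟨⟨x, hx⟩, Subtype.ext hfx⟩
  exact Module.Finite.of_surjective l hsurj


/-- part of Lemma 2.8 of the paper.  For any ordinal `α`, any unital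
C*-algebra that is locally in the class `D_α` is itself in `D_α`.  Here `A` is locally in
`D_α` if for every finite subset `X` of `A` and every `ε > 0` there is a C*-subalgebra `C`
of `A` belonging to `D_α` (i.e. closed and *-isomorphic to a unital C*-algebra in `D_α`)
such that `x ∈_ε C` for all `x ∈ X`. -/
theorem locally_inD (α : Ordinal.{u}) (A : Type u) [CStarAlgebra A]
    (hloc : ∀ (X : Finset A) (ε : ℝ), 0 < ε →
      ∃ C : NonUnitalStarSubalgebra ℂ A, IsClosed (C : Set A) ∧
        (∃ (B : Type u) (instB : CStarAlgebra B), @InD α B instB ∧ @SubIso A _ C B instB) ∧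
        ∀ x ∈ X, MemEps ε (C : Set A) x) :
    InD α A := by
  rw [InD]
  rcases eq_or_ne α 0 with rfl | hα
  · left
    classical
    refine ⟨rfl, fun X ε hε => ?_⟩
    obtain ⟨C, hCc, ⟨B, instB, hB, hiso⟩, happ⟩ := hloc X (ε / 2) (by positivity)
    letI := instB
    obtain ⟨φ⟩ := hiso
    have hBlfd : IsLocFinDim B := by
      rw [InD] at hB
      rcases hB with ⟨-, h⟩ | ⟨h, -⟩
      · exact h
      · exact absurd rfl h
    set f : B →⋆ₙₐ[ℂ] A := embed C φ.symm with hf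
    have hfi : Function.Injective f := embed_injective C φ.symm
    have hfn : ∀ b, ‖f b‖ = ‖b‖ := embed_norm C φ.symm
    have hch : ∀ x : A, ∃ s, s ∈ C ∧ (x ∈ X → ‖x - s‖ < ε / 2) := by
      intro x
      by_cases hx : x ∈ X
      · obtain ⟨s, hs, hn⟩ := happ x hx
        exact ⟨s, hs, fun _ => hn⟩
      · exact ⟨0, zero_mem C, fun h => absurd h hx⟩
    choose c hcC hcn using hch
    set g : A → B := fun x => φ ⟨c x, hcC x⟩ with hg
    have hfg : ∀ x, f (g x) = c x := by
      intro x
      show ((φ.symm (φ ⟨c x, hcC x⟩) : C) : A) = c x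
      rw [StarAlgEquiv.symm_apply_apply]
    obtain ⟨F, hFfd, hFapp⟩ := hBlfd (X.image g) (ε / 2) (by positivity)
    refine ⟨F.map f, map_finiteDimensional f F hFfd, fun x hx => ?_⟩
    obtain ⟨s, hsF, hns⟩ := hFapp (g x) (Finset.mem_image_of_mem g hx)
    refine ⟨f s, NonUnitalStarSubalgebra.mem_map.mpr ⟨s, hsF, rfl⟩, ?_⟩
    have h1 : ‖c x - f s‖ < ε / 2 := by
      rw [← hfg x, ← map_sub, hfn]; exact hns
    calc ‖x - f s‖ = ‖(x - c x) + (c x - f s)‖ := by congr 1; noncomm_ring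
      _ ≤ ‖x - c x‖ + ‖c x - f s‖ := norm_add_le _ _
      _ < ε / 2 + ε / 2 := add_lt_add (hcn x hx) h1
      _ = ε := by ring
  · right
    classical
    refine ⟨hα, fun X ε hε => ?_⟩
    obtain ⟨C, hCc, ⟨B, instB, hB, hiso⟩, happ⟩ := hloc X (ε / 4) (by positivity)
    letI := instB
    obtain ⟨φ⟩ := hiso
    have hBdec : Decomposes B fun S =>
        IsClosed (S : Set B) ∧
        ∃ β : {b : Ordinal.{u} // b < α}, ∃ (B'' : Type u) (instB'' : CStarAlgebra B''),
          @InD β.1 B'' instB'' ∧ @SubIso B _ S B'' instB'' := by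
      rw [InD] at hB
      rcases hB with ⟨h, -⟩ | ⟨-, h⟩
      · exact absurd h hα
      · exact h
    set f : B →⋆ₙₐ[ℂ] A := embed C φ.symm with hf
    have hfi : Function.Injective f := embed_injective C φ.symm
    have hfn : ∀ b, ‖f b‖ = ‖b‖ := embed_norm C φ.symm
    have hch : ∀ x : A, ∃ s, s ∈ C ∧ (x ∈ X → ‖x - s‖ < ε / 4) := by
      intro x
      by_cases hx : x ∈ X
      · obtain ⟨s, hs, hn⟩ := happ x hx
        exact ⟨s, hs, fun _ => hn⟩
      · exact ⟨0, zero_mem C, fun h => absurd h hx⟩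
    choose c hcC hcn using hch
    set g : A → B := fun x => φ ⟨c x, hcC x⟩ with hg
    have hfg : ∀ x, f (g x) = c x := by
      intro x
      show ((φ.symm (φ ⟨c x, hcC x⟩) : C) : A) = c x
      rw [StarAlgEquiv.symm_apply_apply]
    obtain ⟨C', D', E', hC', hD', hE', h, ⟨w, hw⟩, hnh, hcomm, hCapp, hDapp, hEapp,
      hEC, hED, hEh⟩ := hBdec (X.image g) (ε / 4) (by positivity)
    have hclass : ∀ S' : NonUnitalStarSubalgebra ℂ B,
        (IsClosed (S' : Set B) ∧
          ∃ β : {b : Ordinal.{u} // b < α}, ∃ (B'' : Type u) (instB'' : CStarAlgebra B''),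
            @InD β.1 B'' instB'' ∧ @SubIso B _ S' B'' instB'') →
        (IsClosed ((S'.map f : NonUnitalStarSubalgebra ℂ A) : Set A) ∧
          ∃ β : {b : Ordinal.{u} // b < α}, ∃ (B'' : Type u) (instB'' : CStarAlgebra B''),
            @InD β.1 B'' instB'' ∧ @SubIso A _ (S'.map f) B'' instB'') := by
      rintro S' ⟨hcl, β, B'', instB'', hInD, ⟨e⟩⟩
      exact ⟨map_isClosed f hfi S' hcl, β, B'', instB'',
        hInD, ⟨((mapEquiv f hfi S').symm.trans e)⟩⟩
    have hnfh : ‖f h‖ ≤ 1 := by rw [hfn]; exact hnh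
    refine ⟨C'.map f, D'.map f, E'.map f, hclass C' hC', hclass D' hD', hclass E' hE',
      f h, ⟨f w, by rw [hw, map_mul, map_star]⟩, hnfh, ?_, ?_, ?_, ?_, ?_, ?_, ?_⟩
    · -- commutator
      intro x hx
      have hxc : ‖x - c x‖ < ε / 4 := hcn x hx
      have hmid : ‖f h * c x - c x * f h‖ < ε / 4 := by
        rw [← hfg x, ← map_mul, ← map_mul, ← map_sub, hfn]
        exact hcomm (g x) (Finset.mem_image_of_mem g hx)
      have e1 : ‖f h * (x - c x)‖ < ε / 4 := by
        calc ‖f h * (x - c x)‖ ≤ ‖f h‖ * ‖x - c x‖ := norm_mul_le _ _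
          _ ≤ 1 * ‖x - c x‖ := by
            exact mul_le_mul_of_nonneg_right hnfh (norm_nonneg _)
          _ = ‖x - c x‖ := one_mul _
          _ < ε / 4 := hxc
      have e2 : ‖(c x - x) * f h‖ < ε / 4 := by
        calc ‖(c x - x) * f h‖ ≤ ‖c x - x‖ * ‖f h‖ := norm_mul_le _ _
          _ ≤ ‖c x - x‖ * 1 := mul_le_mul_of_nonneg_left hnfh (norm_nonneg _)
          _ = ‖x - c x‖ := by rw [mul_one, norm_sub_rev]
          _ < ε / 4 := hxc
      have key : f h * x - x * f h =
          f h * (x - c x) + (f h * c x - c x * f h) + (c x - x) * f h := by noncomm_ring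
      calc ‖f h * x - x * f h‖
          ≤ ‖f h * (x - c x)‖ + ‖f h * c x - c x * f h‖ + ‖(c x - x) * f h‖ := by
            rw [key]; exact norm_add₃_le
        _ < ε / 4 + ε / 4 + ε / 4 := by linarith
        _ ≤ ε := by linarith
    · -- h x ∈ C
      intro x hx
      obtain ⟨s, hs, hns⟩ := hCapp (g x) (Finset.mem_image_of_mem g hx)
      refine ⟨f s, NonUnitalStarSubalgebra.mem_map.mpr ⟨s, hs, rfl⟩, ?_⟩
      have h1 : ‖f h * c x - f s‖ < ε / 4 := by
        rw [← hfg x, ← map_mul, ← map_sub, hfn]; exact hns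
      have h2 : ‖f h * (x - c x)‖ ≤ ‖x - c x‖ := by
        calc ‖f h * (x - c x)‖ ≤ ‖f h‖ * ‖x - c x‖ := norm_mul_le _ _
          _ ≤ 1 * ‖x - c x‖ := mul_le_mul_of_nonneg_right hnfh (norm_nonneg _)
          _ = ‖x - c x‖ := one_mul _
      have hxc : ‖x - c x‖ < ε / 4 := hcn x hx
      calc ‖f h * x - f s‖ = ‖f h * (x - c x) + (f h * c x - f s)‖ := by congr 1; noncomm_ring
        _ ≤ ‖f h * (x - c x)‖ + ‖f h * c x - f s‖ := norm_add_le _ _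
        _ < ε := by linarith
    · -- (1-h) x ∈ D
      intro x hx
      obtain ⟨s, hs, hns⟩ := hDapp (g x) (Finset.mem_image_of_mem g hx)
      refine ⟨f s, NonUnitalStarSubalgebra.mem_map.mpr ⟨s, hs, rfl⟩, ?_⟩
      have hxc : ‖x - c x‖ < ε / 4 := hcn x hx
      have key : f ((1 - h) * g x) = (1 - f h) * c x := by
        rw [sub_mul, one_mul, map_sub, map_mul, hfg, sub_mul, one_mul]
      have h1 : ‖(1 - f h) * c x - f s‖ < ε / 4 := by
        rw [← key, ← map_sub, hfn]; exact hns
      have h2 : ‖(1 - f h) * (x - c x)‖ ≤ 2 * ‖x - c x‖ := by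
        calc ‖(1 - f h) * (x - c x)‖ = ‖(x - c x) - f h * (x - c x)‖ := by congr 1; noncomm_ring
          _ ≤ ‖x - c x‖ + ‖f h * (x - c x)‖ := norm_sub_le _ _
          _ ≤ ‖x - c x‖ + ‖f h‖ * ‖x - c x‖ := by
              linarith [norm_mul_le (f h) (x - c x)]
          _ ≤ ‖x - c x‖ + 1 * ‖x - c x‖ := by
              linarith [mul_le_mul_of_nonneg_right hnfh (norm_nonneg (x - c x))]
          _ = 2 * ‖x - c x‖ := by ring
      calc ‖(1 - f h) * x - f s‖
          = ‖(1 - f h) * (x - c x) + ((1 - f h) * c x - f s)‖ := by congr 1; noncomm_ring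
        _ ≤ ‖(1 - f h) * (x - c x)‖ + ‖(1 - f h) * c x - f s‖ := norm_add_le _ _
        _ < ε := by linarith
    · -- h(1-h) x ∈ E
      intro x hx
      obtain ⟨s, hs, hns⟩ := hEapp (g x) (Finset.mem_image_of_mem g hx)
      refine ⟨f s, NonUnitalStarSubalgebra.mem_map.mpr ⟨s, hs, rfl⟩, ?_⟩
      have hxc : ‖x - c x‖ < ε / 4 := hcn x hx
      have key : f (h * ((1 - h) * g x)) = f h * ((1 - f h) * c x) := by
        rw [map_mul, sub_mul, one_mul, map_sub, map_mul, hfg, sub_mul, one_mul]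
      have h1 : ‖f h * ((1 - f h) * c x) - f s‖ < ε / 4 := by
        rw [← key, ← map_sub, hfn]; exact hns
      have h2 : ‖f h * ((1 - f h) * (x - c x))‖ ≤ 2 * ‖x - c x‖ := by
        have i1 : ‖(1 - f h) * (x - c x)‖ ≤ 2 * ‖x - c x‖ := by
          calc ‖(1 - f h) * (x - c x)‖ = ‖(x - c x) - f h * (x - c x)‖ := by congr 1; noncomm_ring
            _ ≤ ‖x - c x‖ + ‖f h * (x - c x)‖ := norm_sub_le _ _
            _ ≤ ‖x - c x‖ + ‖f h‖ * ‖x - c x‖ := by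
                linarith [norm_mul_le (f h) (x - c x)]
            _ ≤ ‖x - c x‖ + 1 * ‖x - c x‖ := by
                linarith [mul_le_mul_of_nonneg_right hnfh (norm_nonneg (x - c x))]
            _ = 2 * ‖x - c x‖ := by ring
        calc ‖f h * ((1 - f h) * (x - c x))‖
            ≤ ‖f h‖ * ‖(1 - f h) * (x - c x)‖ := norm_mul_le _ _
          _ ≤ 1 * ‖(1 - f h) * (x - c x)‖ :=
              mul_le_mul_of_nonneg_right hnfh (norm_nonneg _)
          _ ≤ 2 * ‖x - c x‖ := by linarith
      calc ‖f h * ((1 - f h) * x) - f s‖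
          = ‖f h * ((1 - f h) * (x - c x)) + (f h * ((1 - f h) * c x) - f s)‖ := by congr 1; noncomm_ring
        _ ≤ ‖f h * ((1 - f h) * (x - c x))‖ + ‖f h * ((1 - f h) * c x) - f s‖ :=
            norm_add_le _ _
        _ < ε := by linarith
    · -- E ⊆ C
      rintro s hsmem hsn
      obtain ⟨e', he', rfl⟩ := NonUnitalStarSubalgebra.mem_map.mp hsmem
      obtain ⟨t, ht, htn, htd⟩ := hEC e' he' (by rw [← hfn e']; exact hsn)
      exact ⟨f t, NonUnitalStarSubalgebra.mem_map.mpr ⟨t, ht, rfl⟩,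
        by rw [hfn]; exact htn,
        by rw [← map_sub, hfn]; linarith⟩
    · -- E ⊆ D
      rintro s hsmem hsn
      obtain ⟨e', he', rfl⟩ := NonUnitalStarSubalgebra.mem_map.mp hsmem
      obtain ⟨t, ht, htn, htd⟩ := hED e' he' (by rw [← hfn e']; exact hsn)
      exact ⟨f t, NonUnitalStarSubalgebra.mem_map.mpr ⟨t, ht, rfl⟩,
        by rw [hfn]; exact htn,
        by rw [← map_sub, hfn]; linarith⟩
    · -- h e ∈ E
      rintro s hsmem hsn
      obtain ⟨e', he', rfl⟩ := NonUnitalStarSubalgebra.mem_map.mp hsmem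
      obtain ⟨t, ht, htd⟩ := hEh e' he' (by rw [← hfn e']; exact hsn)
      exact ⟨f t, NonUnitalStarSubalgebra.mem_map.mpr ⟨t, ht, rfl⟩,
        by rw [← map_mul, ← map_sub, hfn]; linarith⟩
end

section
/- Let A be a C*-algebra, and let a, b ∈ A be positive elements such that ‖a^{1/2} b a^{1/2} − a‖ < ε for some ε > 0. Then there exists x ∈ A such that (a − ε)₊ = x*x and xx* lies in the set b^{1/2} A b^{1/2} = { b^{1/2} c b^{1/2} : c ∈ A }. -/
/-
Let `d = a^{1/2} b a^{1/2}` and `η = ε - ‖d - a‖ > 0`. Conjugating `a - ‖d - a‖ ≤ d` by `φ(a)`,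
where `φ(t)² = (t - ε)₊ / ((t - ε)₊ + η)` is chosen so that `φ(t)² (t - ε + η) = (t - ε)₊`, gives
`e := (a - ε)₊ ≤ g b g` for `g = φ(a) a^{1/2}`; moreover `g² ≤ (‖a‖ / η) e`.

Next, `e ≤ g* b g` forces `e = z b z*` for some `z`: with `D = g* b g` and `f_σ(t) = √t / (t + σ)`
approximating `t^{-1/2}`, the elements `z_σ = e^{1/2} f_σ(D) g*` satisfy `‖e - z_σ b z_σ*‖ ≤ 2σ`,
and `g* g ≤ C D` makes them Cauchy as `σ → 0`. Then `x = b^{1/2} z*` works, since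
`x* x = z b z*` and `x x* = b^{1/2} (z* z) b^{1/2}`.
-/

universe u

/-- The positive square root `a^{1/2}` of a (positive) element of a C*-algebra, via the
continuous functional calculus. -/
noncomputable def cstarSqrt {A : Type u} [NonUnitalCStarAlgebra A] (a : A) : A :=
  cfcₙ (fun t : ℝ => Real.sqrt t) a

/-- The cut-down `(a - ε)₊` of a (positive) element of a C*-algebra, obtained by applying
the function `t ↦ max (t - ε) 0` via the continuous functional calculus. -/
noncomputable def cstarCutoff {A : Type u} [NonUnitalCStarAlgebra A] (ε : ℝ) (a : A) : A :=
  cfcₙ (fun t : ℝ => max (t - ε) 0) a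

open Filter Topology
open scoped CStarAlgebra

noncomputable def cutoffRatio (ε η t : ℝ) : ℝ := max (t - ε) 0 / (max (t - ε) 0 + η)

/-- The `max` only serves to make this continuous on all of `ℝ`. -/
noncomputable def sqrtDivAdd (σ t : ℝ) : ℝ := √t / (max t 0 + σ)

section Scalar

variable {ε η σ τ t M : ℝ}

lemma cutoffRatio_nonneg (hη : 0 ≤ η) : 0 ≤ cutoffRatio ε η t := by
  unfold cutoffRatio; positivity

lemma cutoffRatio_apply_zero (hε : 0 ≤ ε) : cutoffRatio ε η 0 = 0 := by
  simp [cutoffRatio, hε]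

lemma continuous_cutoffRatio (hη : 0 < η) : Continuous (cutoffRatio ε η) :=
  Continuous.div (by fun_prop) (by fun_prop) fun t => by positivity

lemma cutoffRatio_mul_sub (hη : 0 < η) (t : ℝ) :
    cutoffRatio ε η t * (t - (ε - η)) = max (t - ε) 0 := by
  unfold cutoffRatio
  rcases le_total t ε with h | h
  · simp [max_eq_right (sub_nonpos.2 h)]
  · rw [max_eq_left (sub_nonneg.2 h)]
    field_simp
    ring

lemma cutoffRatio_mul_le (hη : 0 < η) (ht : 0 ≤ t) (htM : t ≤ M) :
    cutoffRatio ε η t * t ≤ M / η * max (t - ε) 0 := by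
  have hM : 0 ≤ M := ht.trans htM
  calc cutoffRatio ε η t * t ≤ max (t - ε) 0 / η * M := by
        unfold cutoffRatio
        gcongr
        linarith [le_max_right (t - ε) 0]
    _ = M / η * max (t - ε) 0 := by ring

lemma sqrtDivAdd_zero : sqrtDivAdd σ 0 = 0 := by simp [sqrtDivAdd]

lemma continuous_sqrtDivAdd (hσ : 0 < σ) : Continuous (sqrtDivAdd σ) :=
  Continuous.div (by fun_prop) (by fun_prop) fun t => by positivity

lemma sqrtDivAdd_of_nonneg (ht : 0 ≤ t) : sqrtDivAdd σ t = √t / (t + σ) := by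
  rw [sqrtDivAdd, max_eq_left ht]

lemma sqrtDivAdd_mul_mul_self (hσ : 0 < σ) (ht : 0 ≤ t) :
    sqrtDivAdd σ t * t * sqrtDivAdd σ t = (t / (t + σ)) ^ 2 := by
  rw [sqrtDivAdd_of_nonneg ht]
  have := Real.mul_self_sqrt ht
  field_simp
  linear_combination t * this

lemma sqrtDivAdd_mul_mul_self_le_one (hσ : 0 < σ) (ht : 0 ≤ t) :
    sqrtDivAdd σ t * t * sqrtDivAdd σ t ≤ 1 := by
  rw [sqrtDivAdd_mul_mul_self hσ ht]
  exact pow_le_one₀ (by positivity) ((div_le_one (by positivity)).2 (by linarith))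

lemma mul_one_sub_sqrtDivAdd_le (hσ : 0 < σ) (ht : 0 ≤ t) :
    t * (1 - sqrtDivAdd σ t * t * sqrtDivAdd σ t) ≤ 2 * σ := by
  rw [sqrtDivAdd_mul_mul_self hσ ht]
  set x := t / (t + σ)
  have hx0 : 0 ≤ x := by positivity
  have hx1 : x ≤ 1 := (div_le_one (by positivity)).2 (by linarith)
  have hσx : t * (1 - x) = σ * x := by
    simp only [x]; field_simp; ring
  calc t * (1 - x ^ 2) = σ * x * (1 + x) := by rw [← hσx]; ring
    _ ≤ σ * 1 * (1 + 1) := by gcongr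
    _ = 2 * σ := by ring

lemma mul_sqrtDivAdd_sub_le (hσ : 0 < σ) (hτ : 0 < τ) (ht : 0 ≤ t) :
    t * ((sqrtDivAdd σ t - sqrtDivAdd τ t) * t * (sqrtDivAdd σ t - sqrtDivAdd τ t)) ≤
      max σ τ := by
  wlog hστ : σ ≤ τ generalizing σ τ
  · rw [max_comm]
    convert this hτ hσ (le_of_not_ge hστ) using 1
    ring
  rw [max_eq_right hστ, sqrtDivAdd_of_nonneg ht, sqrtDivAdd_of_nonneg ht]
  have hsq := Real.mul_self_sqrt ht
  have hexpand : t * ((√t / (t + σ) - √t / (t + τ)) * t * (√t / (t + σ) - √t / (t + τ))) =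
      t ^ 3 * (τ - σ) ^ 2 / ((t + σ) ^ 2 * (t + τ) ^ 2) := by
    field_simp
    linear_combination t ^ 2 * (τ - σ) ^ 2 * hsq
  rw [hexpand, div_le_iff₀ (by positivity)]
  calc t ^ 3 * (τ - σ) ^ 2 ≤ t ^ 2 * (t * τ) * τ := by
        have : (τ - σ) ^ 2 ≤ τ ^ 2 := by nlinarith
        nlinarith [pow_nonneg ht 3]
    _ ≤ (t + σ) ^ 2 * (t + τ) ^ 2 * τ := by
        gcongr
        · nlinarith
        · nlinarith
    _ = τ * ((t + σ) ^ 2 * (t + τ) ^ 2) := by ring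

end Scalar

lemma CStarAlgebra.norm_star_mul_cfc_mul_le {B : Type*} [CStarAlgebra B] [PartialOrder B]
    [StarOrderedRing B] {x d : B} (hxd : x * star x ≤ d) {ψ : ℝ → ℝ} (hψ : Continuous ψ)
    {c : ℝ} (hc : 0 ≤ c) (h : ∀ t ∈ spectrum ℝ d, 0 ≤ ψ t ∧ t * ψ t ≤ c) :
    ‖star x * cfc ψ d * x‖ ≤ c := by
  have hd : 0 ≤ d := (mul_star_self_nonneg x).trans hxd
  set r := cfc (fun t => √(ψ t)) d
  have hr : IsSelfAdjoint r := cfc_predicate _ d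
  have hψr : cfc ψ d = r * r := by
    rw [← cfc_mul ..]
    exact cfc_congr fun t ht => (Real.mul_self_sqrt (h t ht).1).symm
  have hrdr : r * d * r = cfc (fun t => t * ψ t) d := by
    conv_lhs => rw [← cfc_id' ℝ d]
    rw [← cfc_mul .., ← cfc_mul ..]
    exact cfc_congr fun t ht => by linear_combination t * Real.mul_self_sqrt (h t ht).1
  calc ‖star x * cfc ψ d * x‖ = ‖star (r * x) * (r * x)‖ := by
        rw [hψr, star_mul, hr.star_eq]; simp only [mul_assoc]
    _ = ‖(r * x) * star (r * x)‖ := by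
        rw [CStarRing.norm_star_mul_self, CStarRing.norm_self_mul_star]
    _ = ‖r * (x * star x) * r‖ := by
        rw [star_mul, hr.star_eq]; simp only [mul_assoc]
    _ ≤ ‖r * d * r‖ := by
        refine CStarAlgebra.norm_le_norm_of_nonneg_of_le ?_ ?_
        · simpa [hr.star_eq] using star_left_conjugate_nonneg (mul_star_self_nonneg x) r
        · simpa [hr.star_eq] using star_left_conjugate_le_conjugate hxd r
    _ ≤ c := by
        rw [hrdr]
        refine norm_cfc_le hc fun t ht => ?_
        rw [Real.norm_of_nonneg (mul_nonneg (spectrum_nonneg_of_nonneg hd ht) (h t ht).1)]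
        exact (h t ht).2

section Order

variable {A : Type*} [NonUnitalCStarAlgebra A] [PartialOrder A] [StarOrderedRing A]

lemma Unitization.inr_mul_star_le_inr {x d : A} (hxd : x * star x ≤ d) :
    (x : A⁺¹) * star (x : A⁺¹) ≤ (d : A⁺¹) := by
  have hd : IsSelfAdjoint d := .of_nonneg ((mul_star_self_nonneg x).trans hxd)
  rwa [← Unitization.inr_star, ← Unitization.inr_mul, Unitization.inr_le_iff _ _ (.mul_star_self x)]

lemma CStarAlgebra.norm_star_mul_cfcₙ_mul_le {x d : A} (hxd : x * star x ≤ d) {ψ : ℝ → ℝ}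
    (hψ : Continuous ψ) (hψ0 : ψ 0 = 0) {c : ℝ}
    (h : ∀ t ∈ quasispectrum ℝ d, 0 ≤ ψ t ∧ t * ψ t ≤ c) :
    ‖star x * cfcₙ ψ d * x‖ ≤ c := by
  have hc : 0 ≤ c := by simpa using (h 0 (quasispectrum.zero_mem ℝ d)).2
  rw [Unitization.quasispectrum_eq_spectrum_inr' ℝ ℂ] at h
  rw [← Unitization.norm_inr (𝕜 := ℂ), Unitization.inr_mul, Unitization.inr_mul,
    Unitization.inr_star, Unitization.real_cfcₙ_eq_cfc_inr d ψ hψ0]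
  exact norm_star_mul_cfc_mul_le (Unitization.inr_mul_star_le_inr hxd) hψ hc h

lemma CStarAlgebra.norm_star_mul_self_sub_star_mul_cfcₙ_mul_le {x d : A} (hxd : x * star x ≤ d)
    {ψ : ℝ → ℝ} (hψ : Continuous ψ) (hψ0 : ψ 0 = 0) {c : ℝ}
    (h : ∀ t ∈ quasispectrum ℝ d, ψ t ≤ 1 ∧ t * (1 - ψ t) ≤ c) :
    ‖star x * x - star x * cfcₙ ψ d * x‖ ≤ c := by
  have hc : 0 ≤ c := by simpa using (h 0 (quasispectrum.zero_mem ℝ d)).2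
  rw [Unitization.quasispectrum_eq_spectrum_inr' ℝ ℂ] at h
  rw [← Unitization.norm_inr (𝕜 := ℂ), Unitization.inr_sub ℂ, Unitization.inr_mul,
    Unitization.inr_mul, Unitization.inr_mul, Unitization.inr_star,
    Unitization.real_cfcₙ_eq_cfc_inr d ψ hψ0]
  have hxd' := Unitization.inr_mul_star_le_inr hxd
  have hd : IsSelfAdjoint (d : A⁺¹) := .of_nonneg ((mul_star_self_nonneg _).trans hxd')
  have h1 : cfc (fun t => 1 - ψ t) (d : A⁺¹) = 1 - cfc ψ (d : A⁺¹) := by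
    rw [cfc_sub .., cfc_const_one ..]
  have := norm_star_mul_cfc_mul_le hxd' (ψ := fun t => 1 - ψ t) (continuous_const.sub hψ) hc
    fun t ht => ⟨sub_nonneg.2 (h t ht).1, (h t ht).2⟩
  rwa [h1, mul_sub, sub_mul, mul_one] at this

theorem cfcₙ_cutoff_le_conjugate_of_norm_sub_le {a d : A} (ha : IsSelfAdjoint a)
    (hd : IsSelfAdjoint d) {ε η : ℝ} (hη : 0 < η) (h : ‖d - a‖ ≤ ε - η) :
    cfcₙ (fun t => max (t - ε) 0) a ≤
      cfcₙ (fun t => √(cutoffRatio ε η t)) a * d * cfcₙ (fun t => √(cutoffRatio ε η t)) a := by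
  have hε : 0 ≤ ε := by linarith [norm_nonneg (d - a)]
  set φ := fun t => √(cutoffRatio ε η t)
  have hφ : Continuous φ := (continuous_cutoffRatio hη).sqrt
  have hφ0 : φ 0 = 0 := by simp [φ, cutoffRatio_apply_zero hε]
  set r := cfcₙ φ a
  have hr : IsSelfAdjoint r := cfcₙ_predicate _ _
  have hrar : r * a * r = cfcₙ (fun t => φ t * t * φ t) a := by
    rw [cfcₙ_mul (fun t => φ t * t) φ a (hφ.mul continuous_id).continuousOn (by simp [hφ0])
      hφ.continuousOn hφ0, cfcₙ_mul φ (fun t => t) a hφ.continuousOn hφ0, cfcₙ_id' ℝ a]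
  have hrr : r * r = cfcₙ (fun t => φ t * φ t) a := (cfcₙ_mul φ φ a).symm
  have hcut : cfcₙ (fun t => max (t - ε) 0) a = r * a * r - (ε - η) • (r * r) := by
    rw [hrar, hrr, ← cfcₙ_smul .., ← cfcₙ_sub ..]
    refine cfcₙ_congr fun t _ => ?_
    rw [smul_eq_mul, ← cutoffRatio_mul_sub hη t,
      ← Real.mul_self_sqrt (cutoffRatio_nonneg hη.le)]
    ring
  have hconj : r * (a - d) * r ≤ (ε - η) • (r * r) :=
    calc r * (a - d) * r ≤ ‖a - d‖ • (r * r) := by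
          simpa [hr.star_eq] using
            CStarAlgebra.star_left_conjugate_le_norm_smul (a := r) (ha.sub hd)
      _ ≤ (ε - η) • (r * r) :=
          smul_le_smul_of_nonneg_right (by rwa [norm_sub_rev]) hr.mul_self_nonneg
  rw [hcut, sub_le_comm]
  simpa only [mul_sub, sub_mul] using hconj

theorem exists_cstarCutoff_le_star_mul_mul {a b : A} (ha : 0 ≤ a) (hb : IsSelfAdjoint b) {ε : ℝ}
    (h : ‖cstarSqrt a * b * cstarSqrt a - a‖ < ε) :
    ∃ (g : A) (C : ℝ), cstarCutoff ε a ≤ star g * b * g ∧ star g * g ≤ C • (star g * b * g) := by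
  set d := cstarSqrt a * b * cstarSqrt a
  set η := ε - ‖d - a‖
  have hη : 0 < η := sub_pos.2 h
  have hε : 0 ≤ ε := (norm_nonneg _).trans h.le
  set φ := fun t => √(cutoffRatio ε η t)
  have hφ : Continuous φ := (continuous_cutoffRatio hη).sqrt
  have hφ0 : φ 0 = 0 := by simp [φ, cutoffRatio_apply_zero hε]
  set g := cfcₙ (fun t => φ t * √t) a
  have hg : IsSelfAdjoint g := cfcₙ_predicate _ _
  have hsa : IsSelfAdjoint (cstarSqrt a) := cfcₙ_predicate _ _
  have hφg : cfcₙ φ a * cstarSqrt a = g := (cfcₙ_mul φ (fun t => √t) a).symm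
  have hgφ : cstarSqrt a * cfcₙ φ a = g := by
    rw [cstarSqrt, ← cfcₙ_mul (fun t => √t) φ a]
    exact cfcₙ_congr fun t _ => mul_comm _ _
  have heD : cstarCutoff ε a ≤ star g * b * g := by
    have hd : IsSelfAdjoint d := by simpa [hsa.star_eq] using hb.conjugate (cstarSqrt a)
    have := cfcₙ_cutoff_le_conjugate_of_norm_sub_le ha.isSelfAdjoint hd hη (sub_sub_cancel ε _).ge
    calc cstarCutoff ε a ≤ cfcₙ φ a * d * cfcₙ φ a := this
      _ = (cfcₙ φ a * cstarSqrt a) * b * (cstarSqrt a * cfcₙ φ a) := by simp only [d, mul_assoc]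
      _ = star g * b * g := by rw [hφg, hgφ, hg.star_eq]
  have hgg : star g * g ≤ (‖a‖ / η) • cstarCutoff ε a := by
    rw [hg.star_eq, ← cfcₙ_mul .., cstarCutoff, ← cfcₙ_smul ..]
    refine cfcₙ_mono fun t ht => ?_
    have ht0 := quasispectrum_nonneg_of_nonneg a ha t ht
    have htM : t ≤ ‖a‖ := (le_abs_self t).trans
      (NonUnitalIsometricContinuousFunctionalCalculus.norm_quasispectrum_le a ht)
    calc φ t * √t * (φ t * √t) = cutoffRatio ε η t * t := by
          rw [mul_mul_mul_comm, Real.mul_self_sqrt (cutoffRatio_nonneg hη.le),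
            Real.mul_self_sqrt ht0]
      _ ≤ ‖a‖ / η * max (t - ε) 0 := cutoffRatio_mul_le hη ht0 htM
  exact ⟨g, ‖a‖ / η, heD, hgg.trans (smul_le_smul_of_nonneg_left heD (by positivity))⟩

end Order

section Approx

variable {A : Type*} [NonUnitalCStarAlgebra A]

noncomputable def approxFactor (s g b : A) (σ : ℝ) : A :=
  star s * cfcₙ (sqrtDivAdd σ) (star g * b * g) * star g

variable {s g b : A} {σ τ : ℝ}

lemma approxFactor_mul_mul_star (hD : IsSelfAdjoint (star g * b * g)) (hσ : 0 < σ) :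
    approxFactor s g b σ * b * star (approxFactor s g b σ) =
      star s * cfcₙ (fun t => sqrtDivAdd σ t * t * sqrtDivAdd σ t) (star g * b * g) * s := by
  have hf := continuous_sqrtDivAdd hσ
  have hfD : IsSelfAdjoint (cfcₙ (sqrtDivAdd σ) (star g * b * g)) := cfcₙ_predicate _ _
  rw [cfcₙ_mul (fun t => sqrtDivAdd σ t * t) _ _ (hf.mul continuous_id).continuousOn
    (by simp) hf.continuousOn sqrtDivAdd_zero,
    cfcₙ_mul _ (fun t => t) _ hf.continuousOn sqrtDivAdd_zero, cfcₙ_id' ℝ _]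
  simp only [approxFactor, star_mul, star_star, hfD.star_eq]
  simp only [mul_assoc]

lemma approxFactor_sub_approxFactor (hσ : 0 < σ) (hτ : 0 < τ) :
    approxFactor s g b σ - approxFactor s g b τ =
      star s * cfcₙ (fun t => sqrtDivAdd σ t - sqrtDivAdd τ t) (star g * b * g) * star g := by
  rw [cfcₙ_sub _ _ _ (continuous_sqrtDivAdd hσ).continuousOn sqrtDivAdd_zero
    (continuous_sqrtDivAdd hτ).continuousOn sqrtDivAdd_zero]
  simp only [approxFactor, mul_sub, sub_mul]

variable [PartialOrder A] [StarOrderedRing A]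

lemma norm_star_mul_self_sub_approxFactor_le (hsD : s * star s ≤ star g * b * g) (hσ : 0 < σ) :
    ‖star s * s - approxFactor s g b σ * b * star (approxFactor s g b σ)‖ ≤ 2 * σ := by
  have hD : 0 ≤ star g * b * g := (mul_star_self_nonneg s).trans hsD
  rw [approxFactor_mul_mul_star hD.isSelfAdjoint hσ]
  have hf := continuous_sqrtDivAdd hσ
  refine CStarAlgebra.norm_star_mul_self_sub_star_mul_cfcₙ_mul_le hsD
    ((hf.mul continuous_id).mul hf) (by simp [sqrtDivAdd_zero]) fun t ht => ?_
  have ht0 := quasispectrum_nonneg_of_nonneg _ hD t ht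
  exact ⟨sqrtDivAdd_mul_mul_self_le_one hσ ht0, mul_one_sub_sqrtDivAdd_le hσ ht0⟩

lemma norm_approxFactor_sub_sq_le {C : ℝ} (hsD : s * star s ≤ star g * b * g)
    (hg : star g * g ≤ C • (star g * b * g)) (hσ : 0 < σ) (hτ : 0 < τ) :
    ‖approxFactor s g b σ - approxFactor s g b τ‖ ^ 2 ≤ |C| * max σ τ := by
  set D := star g * b * g
  have hD : 0 ≤ D := (mul_star_self_nonneg s).trans hsD
  set F := fun t => sqrtDivAdd σ t - sqrtDivAdd τ t
  have hF : Continuous F := (continuous_sqrtDivAdd hσ).sub (continuous_sqrtDivAdd hτ)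
  have hF0 : F 0 = 0 := by simp [F, sqrtDivAdd_zero]
  set X := cfcₙ F D
  have hX : IsSelfAdjoint X := cfcₙ_predicate _ _
  set w := approxFactor s g b σ - approxFactor s g b τ
  have hw : w = star s * X * star g := approxFactor_sub_approxFactor hσ hτ
  have hXDX : X * D * X = cfcₙ (fun t => F t * t * F t) D := by
    rw [cfcₙ_mul (fun t => F t * t) F D (hF.mul continuous_id).continuousOn (by simp)
      hF.continuousOn hF0, cfcₙ_mul F (fun t => t) D hF.continuousOn hF0,
      cfcₙ_id' ℝ D hD.isSelfAdjoint]
  have hww : w * star w ≤ C • (star s * (X * D * X) * s) := by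
    have := star_left_conjugate_le_conjugate hg (X * s)
    rw [hw]
    simpa only [star_mul, star_star, hX.star_eq, mul_smul_comm, smul_mul_assoc, mul_assoc]
      using this
  calc ‖w‖ ^ 2 = ‖w * star w‖ := by rw [CStarRing.norm_self_mul_star, sq]
    _ ≤ ‖C • (star s * (X * D * X) * s)‖ :=
        CStarAlgebra.norm_le_norm_of_nonneg_of_le (mul_star_self_nonneg w) hww
    _ ≤ |C| * max σ τ := by
        rw [norm_smul, Real.norm_eq_abs, hXDX]
        refine mul_le_mul_of_nonneg_left ?_ (abs_nonneg C)
        refine CStarAlgebra.norm_star_mul_cfcₙ_mul_le hsD ((hF.mul continuous_id).mul hF)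
          (by simp [hF0]) fun t ht => ?_
        have ht0 := quasispectrum_nonneg_of_nonneg _ hD t ht
        refine ⟨?_, mul_sqrtDivAdd_sub_le hσ hτ ht0⟩
        show 0 ≤ F t * t * F t
        rw [mul_right_comm]
        exact mul_nonneg (mul_self_nonneg _) ht0

theorem exists_mul_mul_star_eq_of_le_star_mul_mul {e : A} {C : ℝ} (he : 0 ≤ e)
    (heD : e ≤ star g * b * g) (hg : star g * g ≤ C • (star g * b * g)) :
    ∃ z : A, z * b * star z = e := by
  set s := CFC.sqrt e
  have hs : IsSelfAdjoint s := (CFC.sqrt_nonneg e).isSelfAdjoint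
  have hse : star s * s = e := by rw [hs.star_eq, CFC.sqrt_mul_sqrt_self e he]
  have hsD : s * star s ≤ star g * b * g := by rwa [hs.star_eq, CFC.sqrt_mul_sqrt_self e he]
  set u : ℕ → ℝ := fun n => 1 / (n + 1)
  have hu : ∀ n, 0 < u n := fun n => Nat.one_div_pos_of_nat
  have hu0 : Tendsto u atTop (𝓝 0) := tendsto_one_div_add_atTop_nhds_zero_nat
  set Z := fun n => approxFactor s g b (u n)
  have hZ : CauchySeq Z := by
    refine cauchySeq_of_le_tendsto_0 (fun N => √(|C| * u N)) (fun n m N hn hm => ?_) ?_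
    · rw [dist_eq_norm, Real.le_sqrt (norm_nonneg _) (mul_nonneg (abs_nonneg C) (hu N).le)]
      refine (norm_approxFactor_sub_sq_le hsD hg (hu n) (hu m)).trans ?_
      gcongr
      exact max_le (Nat.one_div_le_one_div hn) (Nat.one_div_le_one_div hm)
    · simpa using (hu0.const_mul |C|).sqrt
  obtain ⟨z, hz⟩ := cauchySeq_tendsto_of_complete hZ
  refine ⟨z, tendsto_nhds_unique ((hz.mul_const b).mul hz.star) ?_⟩
  rw [← hse, tendsto_iff_norm_sub_tendsto_zero]
  refine squeeze_zero (fun n => norm_nonneg _) (fun n => ?_) (by simpa using hu0.const_mul 2)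
  rw [norm_sub_rev]
  exact norm_star_mul_self_sub_approxFactor_le hsD (hu n)

end Approx

theorem exists_factorization_of_cutoff_general {A : Type u} [NonUnitalCStarAlgebra A]
    (a b : A) (ha : ∃ y : A, a = star y * y) (hb : ∃ y : A, b = star y * y)
    (ε : ℝ) (h : ‖cstarSqrt a * b * cstarSqrt a - a‖ < ε) :
    ∃ x : A, cstarCutoff ε a = star x * x ∧
      ∃ c : A, x * star x = cstarSqrt b * c * cstarSqrt b := by
  let _ := CStarAlgebra.spectralOrder A
  have _ := CStarAlgebra.spectralOrderedRing A
  have ha₀ : 0 ≤ a := by obtain ⟨y, rfl⟩ := ha; exact star_mul_self_nonneg y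
  have hb₀ : 0 ≤ b := by obtain ⟨y, rfl⟩ := hb; exact star_mul_self_nonneg y
  obtain ⟨g, C, heD, hg⟩ := exists_cstarCutoff_le_star_mul_mul ha₀ hb₀.isSelfAdjoint h
  obtain ⟨z, hz⟩ := exists_mul_mul_star_eq_of_le_star_mul_mul (e := cstarCutoff ε a)
    (cfcₙ_nonneg fun t _ => le_max_right (t - ε) 0) heD hg
  have hsb : IsSelfAdjoint (CFC.sqrt b) := (CFC.sqrt_nonneg b).isSelfAdjoint
  rw [show cstarSqrt b = CFC.sqrt b from (CFC.sqrt_eq_real_sqrt b).symm]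
  refine ⟨CFC.sqrt b * star z, ?_, star z * z, ?_⟩
  · rw [star_mul, star_star, hsb.star_eq, ← hz]
    conv_lhs => rw [← CFC.sqrt_mul_sqrt_self b]
    simp only [mul_assoc]
  · rw [star_mul, star_star, hsb.star_eq]
    simp only [mul_assoc]

/-- Lemma 3.15 of the paper.  Let `A` be a C*-algebra and `a, b ∈ A`
positive elements with `‖a^{1/2} b a^{1/2} - a‖ < ε`.  Then there exists `x ∈ A` such that
`(a - ε)₊ = x* x` and `x x*` lies in `b^{1/2} A b^{1/2}`. -/
theorem exists_factorization_of_cutoff {A : Type u} [NonUnitalCStarAlgebra A]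
    (a b : A) (ha : ∃ y : A, a = star y * y) (hb : ∃ y : A, b = star y * y)
    (ε : ℝ) (hε : 0 < ε) (h : ‖cstarSqrt a * b * cstarSqrt a - a‖ < ε) :
    ∃ x : A, cstarCutoff ε a = star x * x ∧
      ∃ c : A, x * star x = cstarSqrt b * c * cstarSqrt b :=
  exists_factorization_of_cutoff_general a b ha hb ε h
end
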